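/- arXiv:math/0504531 — 6 statements merged into one kernel-verified Lean document; each statement's English description precedes it below -/
import Mathlib

section
/- The log-Catalan numbers c'_n are positive integers for all n ≥ 1. -/
/-!
Comparing coefficients of `t^n` in `c'(t) (1 + f(t)) = t f'(t)` gives
`c'_n = n c_n - ∑_{l=1}^{n-1} c'_l c_{n-l}`, so the `c'_n` are integers by induction. The same
recurrence, together with `c_n = ∑_{l=1}^{n-1} c_l c_{n-l}`, propagates the bounds
`c_n ≤ c'_n ≤ n c_n`: the upper bounds `c'_l ≤ l c_l ≤ (n-1) c_l` for `l < n` give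
`c'_n ≥ n c_n - (n-1) c_n = c_n`, and the lower bounds make the subtracted sum nonnegative.
-/

open PowerSeries Finset

section CoeffRecurrence

variable {R : Type*} [CommSemiring R]

theorem coeff_X_mul_derivative (f : R⟦X⟧) (n : ℕ) :
    coeff n (X * d⁄dX R f) = n * coeff n f := by
  cases n with
  | zero => simp
  | succ n => rw [coeff_succ_X_mul, coeff_derivative, mul_comm]; push_cast; rfl

theorem sum_antidiagonal_eq_sum_Ico_of_eq_zero {a b : ℕ → R} (ha : a 0 = 0) (hb : b 0 = 0)
    (n : ℕ) :
    ∑ p ∈ antidiagonal n, a p.1 * b p.2 = ∑ l ∈ Ico 1 n, a l * b (n - l) := by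
  rw [Nat.sum_antidiagonal_eq_sum_range_succ_mk, sum_range_succ, Nat.sub_self, hb, mul_zero,
    add_zero]
  rcases Nat.eq_zero_or_pos n with rfl | hn
  · simp
  · rw [range_eq_Ico, sum_eq_sum_Ico_succ_bot hn, ha, zero_mul, zero_add]

theorem coeff_recurrence_of_mk_mul_one_add_eq_X_mul_derivative {a b : ℕ → R} (ha : a 0 = 0)
    (hb : b 0 = 0) (h : mk a * (1 + mk b) = X * d⁄dX R (mk b)) (n : ℕ) :
    a n + ∑ l ∈ Ico 1 n, a l * b (n - l) = n * b n := by
  have := congrArg (coeff n) h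
  rw [mul_add, mul_one, map_add, coeff_mul, coeff_X_mul_derivative] at this
  simp only [coeff_mk] at this
  rwa [sum_antidiagonal_eq_sum_Ico_of_eq_zero ha hb] at this

end CoeffRecurrence

theorem mem_subring_of_recurrence {R : Type*} [CommRing R] {S : Subring R} {a b : ℕ → R}
    (hb : ∀ n, b n ∈ S)
    (h : ∀ n, a n + ∑ l ∈ Ico 1 n, a l * b (n - l) = n * b n) (n : ℕ) : a n ∈ S := by
  induction n using Nat.strong_induction_on with
  | _ n ih =>
    rw [eq_sub_of_add_eq (h n)]
    exact sub_mem (mul_mem (natCast_mem S n) (hb n))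
      (sum_mem fun l hl => mul_mem (ih l (mem_Ico.1 hl).2) (hb _))

section Bounds

variable {R : Type*} [CommRing R] [LinearOrder R] [IsStrictOrderedRing R]

theorem le_and_le_natCast_mul_of_recurrence {a c : ℕ → R} (hc : ∀ n, 0 ≤ c n)
    (hrec : ∀ n, 2 ≤ n → c n = ∑ l ∈ Ico 1 n, c l * c (n - l))
    (h : ∀ n, a n + ∑ l ∈ Ico 1 n, a l * c (n - l) = n * c n) :
    ∀ n, 1 ≤ n → c n ≤ a n ∧ a n ≤ n * c n := by
  intro n
  induction n using Nat.strong_induction_on with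
  | _ n ih =>
    intro hn
    obtain rfl | hn2 : n = 1 ∨ 2 ≤ n := by omega
    · have h1 := h 1
      simp only [Ico_self, sum_empty, add_zero, Nat.cast_one, one_mul] at h1
      simp [h1]
    have hsum_nonneg : 0 ≤ ∑ l ∈ Ico 1 n, a l * c (n - l) :=
      sum_nonneg fun l hl => mul_nonneg ((hc l).trans (ih l (mem_Ico.1 hl).2 (mem_Ico.1 hl).1).1)
        (hc _)
    have hsum_le : ∑ l ∈ Ico 1 n, a l * c (n - l) ≤ (n - 1) * c n := by
      rw [hrec n hn2, mul_sum]
      refine sum_le_sum fun l hl => ?_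
      obtain ⟨hl1, hln⟩ := mem_Ico.1 hl
      have hl : (l : R) ≤ n - 1 := by
        rw [le_sub_iff_add_le]; exact_mod_cast Nat.succ_le_of_lt hln
      calc a l * c (n - l) ≤ (l * c l) * c (n - l) :=
            mul_le_mul_of_nonneg_right (ih l hln hl1).2 (hc _)
        _ ≤ ((n - 1) * c l) * c (n - l) :=
            mul_le_mul_of_nonneg_right (mul_le_mul_of_nonneg_right hl (hc l)) (hc _)
        _ = (n - 1) * (c l * c (n - l)) := mul_assoc _ _ _
    have := h n
    constructor <;> linarith

end Bounds

theorem one_le_of_catalan_recurrence {c : ℕ → ℕ} (hc1 : c 1 = 1)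
    (hrec : ∀ n, 2 ≤ n → c n = ∑ l ∈ Ico 1 n, c l * c (n - l)) :
    ∀ n, 1 ≤ n → 1 ≤ c n := by
  intro n
  induction n using Nat.strong_induction_on with
  | _ n ih =>
    intro hn
    obtain rfl | hn2 : n = 1 ∨ 2 ≤ n := by omega
    · exact hc1.ge
    calc 1 ≤ c 1 * c (n - 1) := by rw [hc1, one_mul]; exact ih (n - 1) (by omega) (by omega)
      _ ≤ ∑ l ∈ Ico 1 n, c l * c (n - l) :=
        single_le_sum (f := fun l => c l * c (n - l)) (fun _ _ => Nat.zero_le _)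
          (mem_Ico.2 ⟨le_rfl, hn2⟩)
      _ = c n := (hrec n hn2).symm

/-- The log-Catalan numbers `c'_n`, defined by
`∑_{n≥1} c'_n t^n = t · f'(t)/(1 + f(t))` in `ℚ[[t]]` (where `f` is the generating
series of the Catalan numbers), are positive integers for all `n ≥ 1`. -/
theorem stmt3 (c : ℕ → ℕ) (hc1 : c 1 = 1)
    (hrec : ∀ n, 2 ≤ n → c n = ∑ l ∈ Finset.Ico 1 n, c l * c (n - l))
    (f : PowerSeries ℚ)
    (hf : f = PowerSeries.mk fun n => if n = 0 then 0 else (c n : ℚ))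
    (c' : ℕ → ℚ) (hc'0 : c' 0 = 0)
    (hc' : (PowerSeries.mk fun n => c' n) * (1 + f) =
      PowerSeries.X * PowerSeries.derivativeFun f) :
    ∀ n, 1 ≤ n → ∃ m : ℕ, 0 < m ∧ c' n = (m : ℚ) := by
  have hcoeff (n : ℕ) : c' n + ∑ l ∈ Ico 1 n, c' l * c (n - l) = n * c n := by
    subst hf
    have h := coeff_recurrence_of_mk_mul_one_add_eq_X_mul_derivative hc'0 (if_pos rfl) hc' n
    rcases Nat.eq_zero_or_pos n with rfl | hn
    · simp [hc'0]
    rwa [if_neg hn.ne', sum_congr rfl fun l hl => by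
      rw [if_neg (Nat.sub_ne_zero_of_lt (mem_Ico.1 hl).2)]] at h
  intro n hn
  obtain ⟨z, hz⟩ := mem_subring_of_recurrence (S := (Int.castRingHom ℚ).range)
    (b := fun n => (c n : ℚ)) (fun n => ⟨c n, Int.cast_natCast _⟩) hcoeff n
  rw [eq_intCast] at hz
  have hc'_ge : (c n : ℚ) ≤ c' n := (le_and_le_natCast_mul_of_recurrence
    (fun n => Nat.cast_nonneg (c n)) (by exact_mod_cast hrec) hcoeff n hn).1
  have hz_pos : 0 < z := by
    rw [← Int.cast_pos (R := ℚ), hz]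
    exact lt_of_lt_of_le (by exact_mod_cast one_le_of_catalan_recurrence hc1 hrec n hn) hc'_ge
  exact ⟨z.toNat, by omega, by rw [← hz]; exact_mod_cast (Int.toNat_of_nonneg hz_pos.le).symm⟩
end

section
/- The generating series of the log-Catalan numbers equals 2t / (3√(1-4t) - 1 + 4t) as a formal power series, equivalently t · d/dt log((3 - √(1-4t))/2). -/
/-!
The Catalan series satisfies `f = X + f²`, so `(1 - 2f)² = 1 - 4X`, and comparing constant terms
gives `s = 1 - 2f`. Then `3 - s = 2(1 + f)` and `s' = -2f'`, which turns the defining relation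
`g(1 + f) = X f'` into `g(3 - s) = -X s'`. Differentiating `f = X + f²` gives `s s' = -2`, so
multiplying by `s` and using `s² = 1 - 4X` yields `g(3s - 1 + 4X) = 2X`.
-/

open PowerSeries

namespace PowerSeries

variable {R : Type*}

theorem mk_catalan_eq_X_add_sq [CommSemiring R] (c : ℕ → ℕ) (hc1 : c 1 = 1)
    (hrec : ∀ n, 2 ≤ n → c n = ∑ l ∈ Finset.Ico 1 n, c l * c (n - l)) :
    (mk fun n => if n = 0 then 0 else (c n : R)) =
      X + (mk fun n => if n = 0 then 0 else (c n : R)) ^ 2 := by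
  ext n
  rcases n with _ | _ | n
  · simp
  · simp [sq, coeff_mul, Finset.Nat.antidiagonal_succ, hc1]
  · rw [map_add, coeff_X, if_neg (by omega), zero_add, coeff_mk, if_neg (by omega),
      hrec (n + 2) (by omega), Finset.sum_Ico_eq_sum_range, sq, coeff_mul,
      Finset.Nat.sum_antidiagonal_eq_sum_range_succ_mk, Finset.sum_range_succ,
      Finset.sum_range_succ']
    simp [add_comm 1, Nat.sub_eq_zero_iff_le, Finset.sum_ite_of_false]

theorem eq_of_sq_eq_sq_of_constantCoeff_eq [CommRing R] [IsDomain R] [NeZero (2 : R)]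
    {a b : R⟦X⟧} (h : a ^ 2 = b ^ 2) (hc : constantCoeff a = constantCoeff b)
    (ha : constantCoeff a ≠ 0) : a = b := by
  refine (sq_eq_sq_iff_eq_or_eq_neg.mp h).resolve_right fun hab => ha ?_
  have hneg := congrArg constantCoeff hab
  rw [map_neg, ← hc] at hneg
  exact (mul_eq_zero.mp (by linear_combination hneg : (2 : R) * constantCoeff a = 0)).resolve_left
    two_ne_zero

theorem derivative_mul_one_sub_two_mul [CommRing R] {f : R⟦X⟧} (hf : f = X + f ^ 2) :
    d⁄dX R f * (1 - 2 * f) = 1 := by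
  have h := congrArg (d⁄dX R) hf
  rw [map_add, derivative_X, derivative_pow] at h
  linear_combination h

end PowerSeries

theorem stmt4_general (c : ℕ → ℕ) (hc1 : c 1 = 1)
    (hrec : ∀ n, 2 ≤ n → c n = ∑ l ∈ Finset.Ico 1 n, c l * c (n - l))
    (f : PowerSeries ℚ)
    (hf : f = PowerSeries.mk fun n => if n = 0 then 0 else (c n : ℚ))
    (c' : ℕ → ℚ)
    (hc' : (PowerSeries.mk fun n => c' n) * (1 + f) =
      PowerSeries.X * PowerSeries.derivativeFun f)
    (s : PowerSeries ℚ) (hs : s ^ 2 = 1 - 4 * PowerSeries.X)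
    (hs1 : PowerSeries.constantCoeff (R := ℚ) s = 1) :
    (PowerSeries.mk fun n => c' n) * (3 * s - 1 + 4 * PowerSeries.X) =
        2 * PowerSeries.X ∧
      (PowerSeries.mk fun n => c' n) * (3 - s) =
        PowerSeries.X * (-PowerSeries.derivativeFun s) := by
  set g : ℚ⟦X⟧ := mk fun n => c' n
  change g * (1 + f) = X * d⁄dX ℚ f at hc'
  change g * (3 * s - 1 + 4 * X) = 2 * X ∧ g * (3 - s) = X * -d⁄dX ℚ s
  have hfX : f = X + f ^ 2 := hf ▸ mk_catalan_eq_X_add_sq c hc1 hrec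
  have hf0 : constantCoeff f = 0 := by simp [hf]
  have hsf : s = 1 - 2 * f :=
    eq_of_sq_eq_sq_of_constantCoeff_eq (by linear_combination hs + 4 * hfX)
      (by simp [hs1, hf0]) (by simp [hs1])
  have hds : d⁄dX ℚ s = -2 * d⁄dX ℚ f := by
    rw [hsf, two_mul, map_sub, map_add, derivative_one]
    ring
  have hss : s * d⁄dX ℚ s = -2 := by
    rw [hds, hsf]
    linear_combination -2 * derivative_mul_one_sub_two_mul hfX
  have hlog : g * (3 - s) = X * -d⁄dX ℚ s := by
    linear_combination (-g) * hsf + 2 * hc' + X * hds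
  exact ⟨by linear_combination s * hlog + g * hs - X * hss, hlog⟩

/-- The generating series `g = ∑_{n≥1} c'_n t^n` of the log-Catalan numbers
equals `2t / (3√(1-4t) - 1 + 4t)` as a formal power series, where `√(1-4t)` is the formal
power series `s` with `s² = 1-4t` and constant term `1`; equivalently it equals
`t · d/dt log((3 - √(1-4t))/2)`, i.e. `g · (3 - s) = t · (-s')`. -/
theorem stmt4 (c : ℕ → ℕ) (hc1 : c 1 = 1)
    (hrec : ∀ n, 2 ≤ n → c n = ∑ l ∈ Finset.Ico 1 n, c l * c (n - l))
    (f : PowerSeries ℚ)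
    (hf : f = PowerSeries.mk fun n => if n = 0 then 0 else (c n : ℚ))
    (c' : ℕ → ℚ) (hc'0 : c' 0 = 0)
    (hc' : (PowerSeries.mk fun n => c' n) * (1 + f) =
      PowerSeries.X * PowerSeries.derivativeFun f)
    (s : PowerSeries ℚ) (hs : s ^ 2 = 1 - 4 * PowerSeries.X)
    (hs1 : PowerSeries.constantCoeff (R := ℚ) s = 1) :
    (PowerSeries.mk fun n => c' n) * (3 * s - 1 + 4 * PowerSeries.X) =
        2 * PowerSeries.X ∧
      (PowerSeries.mk fun n => c' n) * (3 - s) =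
        PowerSeries.X * (-PowerSeries.derivativeFun s) :=
  stmt4_general c hc1 hrec f hf c' hc' s hs hs1
end

section
/- In the set of all planar rooted trees with n vertices, the total number of vertices with even arity equals the n-th log-Catalan number c'_n. Equivalently, the generating series of the number of odd-arity vertices across all planar trees with n vertices equals t(1-√(1-4t)) / ((3-√(1-4t))√(1-4t)), with coefficients 0, 1, 2, 7, 24, 86, 314, ... -/
/-!
Removing the root identifies a tree with `n + 1` vertices with the list (forest) of its
subtrees, a forest with `n` vertices, and a nonempty forest is a first tree followed by a
forest. For the forest series `A` and the tree series `T = X A` this gives `T = X + T²`, hence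
`T' (1 - 2T) = 1` and `√(1 - 4X) = 1 - 2T`. The series `P`, `Q` of forests of even and odd
length satisfy `P = 1 + T Q`, `Q = T P`, so `P (1 - T²) = 1`. If a statistic gives each vertex
a weight `r (arity)`, splitting off the first tree shows that its forest series `W` satisfies
`W (1 - 2T) = T R`, where `R` is the series of forests `L` weighted by `r L.length`. With
`R = P` (resp. `Q`), the tree series of even-arity (resp. odd-arity) vertices becomes
`X / ((1 - 2T)(1 + T)) = X T' / (1 + T)` (resp. `X T / ((1 - 2T)(1 + T))`).
-/

open PowerSeries

/-- A planar rooted tree: each vertex has a finite ordered (possibly empty) list of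
children. -/
inductive PTree6 : Type
  | node : (k : ℕ) → (Fin k → PTree6) → PTree6

namespace PTree6

/-- Number of vertices. -/
def vcount : PTree6 → ℕ
  | .node k f => 1 + ∑ i : Fin k, vcount (f i)

/-- Number of vertices of even arity (arity = number of children; leaves have arity 0,
which is even). -/
def evenAr : PTree6 → ℕ
  | .node k f => (if Even k then 1 else 0) + ∑ i : Fin k, evenAr (f i)

/-- Number of vertices of odd arity. -/
def oddAr : PTree6 → ℕ
  | .node k f => (if ¬ Even k then 1 else 0) + ∑ i : Fin k, oddAr (f i)

end PTree6

namespace PTree6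

open Finset PowerSeries

def children : PTree6 → List PTree6
  | .node _ f => List.ofFn f

def ofList (L : List PTree6) : PTree6 := .node L.length L.get

@[simp] lemma children_ofList (L : List PTree6) : children (ofList L) = L :=
  List.ofFn_get L

@[simp] lemma ofList_children (t : PTree6) : ofList (children t) = t := by
  obtain ⟨k, f⟩ := t
  simp only [ofList, children]
  congr 1
  · simp
  · exact (Fin.heq_fun_iff (by simp)).2 fun i => by simp

lemma ofList_injective : Function.Injective ofList :=
  Function.LeftInverse.injective children_ofList

lemma vcount_ofList (L : List PTree6) : vcount (ofList L) = 1 + (L.map vcount).sum := by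
  simp [ofList, vcount]

lemma evenAr_ofList (L : List PTree6) :
    evenAr (ofList L) = (if Even L.length then 1 else 0) + (L.map evenAr).sum := by
  simp [ofList, evenAr]

lemma oddAr_ofList (L : List PTree6) :
    oddAr (ofList L) = (if ¬ Even L.length then 1 else 0) + (L.map oddAr).sum := by
  simp [ofList, oddAr]

lemma vcount_eq_one_add (t : PTree6) : vcount t = 1 + ((children t).map vcount).sum := by
  conv_lhs => rw [← ofList_children t]
  exact vcount_ofList _

section Forests

noncomputable local instance : DecidableEq PTree6 := Classical.decEq _

@[simps]
def consOfList : List PTree6 × List PTree6 ↪ List PTree6 :=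
  ⟨fun AB => ofList AB.1 :: AB.2, fun _ _ h => by
    simp only [List.cons.injEq] at h
    exact Prod.ext (ofList_injective h.1) h.2⟩

noncomputable def forests : ℕ → Finset (List PTree6)
  | 0 => {[]}
  | m + 1 => (antidiagonal m).attach.biUnion fun p =>
      (forests p.1.1 ×ˢ forests p.1.2).map consOfList
  decreasing_by all_goals (have := HasAntidiagonal.mem_antidiagonal.1 p.2; omega)

lemma forests_succ (m : ℕ) : forests (m + 1) =
    (antidiagonal m).biUnion fun p => (forests p.1 ×ˢ forests p.2).map consOfList := by
  rw [forests]
  ext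
  simp

lemma mem_forests {m : ℕ} {L : List PTree6} : L ∈ forests m ↔ (L.map vcount).sum = m := by
  induction m using Nat.strong_induction_on generalizing L with
  | _ m ih =>
  match m, L with
  | 0, [] => simp [forests]
  | 0, t :: B => simp [forests, vcount_eq_one_add t]
  | m + 1, [] => simp [forests_succ, consOfList]
  | m + 1, t :: B =>
    have ht := vcount_eq_one_add t
    simp only [forests_succ, mem_biUnion, mem_map, mem_product, HasAntidiagonal.mem_antidiagonal,
      consOfList_apply, List.cons.injEq, List.map_cons, List.sum_cons]
    constructor
    · rintro ⟨⟨i, j⟩, hij, ⟨A, B'⟩, ⟨hA, hB⟩, rfl, rfl⟩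
      rw [ih i (by omega)] at hA
      rw [ih j (by omega)] at hB
      simp only [children_ofList] at hij hA hB ht ⊢
      omega
    · intro h
      exact ⟨(((children t).map vcount).sum, (B.map vcount).sum), by omega, (children t, B),
        ⟨(ih _ (by omega)).2 rfl, (ih _ (by omega)).2 rfl⟩, by simp, rfl⟩

lemma sum_forests_succ {M : Type*} [AddCommMonoid M] (w : List PTree6 → M) (m : ℕ) :
    ∑ L ∈ forests (m + 1), w L =
      ∑ p ∈ antidiagonal m, ∑ A ∈ forests p.1, ∑ B ∈ forests p.2, w (ofList A :: B) := by
  rw [forests_succ, sum_biUnion]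
  · simp [sum_product]
  · intro p _ q _ hpq
    simp only [Function.onFun, disjoint_left, mem_map, mem_product, not_exists, not_and]
    rintro _ ⟨⟨A, B⟩, ⟨hA, hB⟩, rfl⟩ ⟨A', B'⟩ ⟨hA', hB'⟩ h
    obtain ⟨rfl, rfl⟩ := Prod.ext_iff.1 (consOfList.injective h)
    rw [mem_forests] at hA hB hA' hB'
    exact hpq (Prod.ext (hA.symm.trans hA') (hB.symm.trans hB'))

end Forests

def ofListEmb : List PTree6 ↪ PTree6 := ⟨ofList, ofList_injective⟩

lemma mem_map_ofListEmb_forests {m : ℕ} {t : PTree6} :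
    t ∈ (forests m).map ofListEmb ↔ vcount t = m + 1 := by
  simp only [mem_map, mem_forests]
  constructor
  · rintro ⟨L, hL, rfl⟩
    simp [ofListEmb, vcount_ofList, hL, add_comm]
  · intro h
    exact ⟨children t, by rw [vcount_eq_one_add] at h; omega, ofList_children t⟩

lemma sum_eq_sum_forests {M : Type*} [AddCommMonoid M] (g : PTree6 → M) {m : ℕ}
    {Tset : Finset PTree6} (hT : ∀ t, t ∈ Tset ↔ vcount t = m + 1) :
    ∑ t ∈ Tset, g t = ∑ L ∈ forests m, g (ofList L) := by
  rw [show Tset = (forests m).map ofListEmb from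
    ext fun t => by rw [hT, mem_map_ofListEmb_forests], sum_map]
  rfl

section Semiring

variable {R : Type*} [CommSemiring R]

noncomputable def forestSeries (w : List PTree6 → R) : R⟦X⟧ :=
  mk fun m => ∑ L ∈ forests m, w L

lemma forestSeries_add (w w' : List PTree6 → R) :
    forestSeries (fun L => w L + w' L) = forestSeries w + forestSeries w' := by
  ext m
  simp [forestSeries, sum_add_distrib]

lemma forestSeries_eq_of_cons_mul {w u v : List PTree6 → R}
    (h : ∀ A B, w (ofList A :: B) = u A * v B) :
    forestSeries w = C (w []) + X * (forestSeries u * forestSeries v) := by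
  ext (_ | m)
  · simp [forestSeries, forests]
  · rw [map_add, coeff_succ_X_mul, coeff_C, if_neg m.succ_ne_zero, zero_add, coeff_mul]
    simp [forestSeries, sum_forests_succ, h, sum_mul_sum]

lemma forestSeries_eq_of_cons_add {w u v : List PTree6 → R}
    (h : ∀ A B, w (ofList A :: B) = u A + v B) :
    forestSeries w = C (w []) +
      X * (forestSeries u * forestSeries 1 + forestSeries 1 * forestSeries v) := by
  ext (_ | m)
  · simp [forestSeries, forests]
  · rw [map_add, coeff_succ_X_mul, coeff_C, if_neg m.succ_ne_zero, zero_add, map_add, coeff_mul,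
      coeff_mul, ← sum_add_distrib]
    simp [forestSeries, sum_forests_succ, h, sum_add_distrib, sum_mul, mul_sum, mul_comm]

variable (R)

/-- Its `n`-th coefficient is the sum of `s` over the trees with `n` vertices. -/
noncomputable def statSeries (s : PTree6 → ℕ) : R⟦X⟧ :=
  X * forestSeries fun L => (s (ofList L) : R)

noncomputable def lengthSeries (r : ℕ → ℕ) : R⟦X⟧ :=
  forestSeries fun L => (r L.length : R)

noncomputable def treeCountSeries : R⟦X⟧ := X * forestSeries 1

variable {R}

lemma coeff_succ_statSeries (s : PTree6 → ℕ) {m : ℕ} {Tset : Finset PTree6}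
    (hT : ∀ t, t ∈ Tset ↔ vcount t = m + 1) :
    coeff (m + 1) (statSeries R s) = ∑ t ∈ Tset, (s t : R) := by
  rw [statSeries, coeff_succ_X_mul, sum_eq_sum_forests _ hT, forestSeries, coeff_mk]

lemma constantCoeff_statSeries (s : PTree6 → ℕ) : constantCoeff (statSeries R s) = 0 := by
  simp [statSeries]

lemma mk_eq_statSeries {s : PTree6 → ℕ} {a : ℕ → ℕ} (h0 : a 0 = 0)
    (h : ∀ n, 1 ≤ n → ∀ Tset : Finset PTree6, (∀ t, t ∈ Tset ↔ vcount t = n) →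
      a n = ∑ t ∈ Tset, s t) :
    (mk fun n => (a n : R)) = statSeries R s := by
  ext (_ | m)
  · simp [h0, constantCoeff_statSeries]
  · rw [coeff_succ_statSeries s fun _ => mem_map_ofListEmb_forests, coeff_mk,
      h (m + 1) (by omega) _ fun _ => mem_map_ofListEmb_forests, Nat.cast_sum]

lemma constantCoeff_treeCountSeries : constantCoeff (treeCountSeries R) = 0 := by
  simp [treeCountSeries]

lemma treeCountSeries_eq_X_add_sq : treeCountSeries R = X + treeCountSeries R ^ 2 := by
  have h := forestSeries_eq_of_cons_mul (R := R) (w := 1) (u := 1) (v := 1)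
    fun _ _ => (mul_one 1).symm
  simp only [Pi.one_apply, map_one] at h
  rw [treeCountSeries]
  conv_lhs => rw [h]
  ring

lemma lengthSeries_odd :
    lengthSeries R (fun k => if ¬ Even k then 1 else 0) =
      treeCountSeries R * lengthSeries R (fun k => if Even k then 1 else 0) := by
  have h := forestSeries_eq_of_cons_mul (R := R)
    (w := fun L => ((if ¬ Even L.length then 1 else 0 : ℕ) : R)) (u := 1)
    (v := fun L => ((if Even L.length then 1 else 0 : ℕ) : R))
    fun A B => by simp [Nat.even_add_one]
  simp only [lengthSeries, treeCountSeries]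
  rw [h]
  simp [mul_assoc]

end Semiring

section Ring

variable {R : Type*} [CommRing R]

lemma lengthSeries_even_mul :
    lengthSeries R (fun k => if Even k then 1 else 0) * (1 - treeCountSeries R ^ 2) = 1 := by
  have h := forestSeries_eq_of_cons_mul (R := R)
    (w := fun L => ((if Even L.length then 1 else 0 : ℕ) : R)) (u := 1)
    (v := fun L => ((if ¬ Even L.length then 1 else 0 : ℕ) : R))
    fun A B => by simp [Nat.even_add_one]
  simp only [List.length_nil, Even.zero, if_true, Nat.cast_one, map_one] at h
  have hodd := lengthSeries_odd (R := R)
  simp only [lengthSeries, treeCountSeries] at hodd ⊢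
  linear_combination h + X * forestSeries 1 * hodd

lemma statSeries_mul_of_ofList {s : PTree6 → ℕ} {r : ℕ → ℕ}
    (hs : ∀ L, s (ofList L) = r L.length + (L.map s).sum) :
    statSeries R s * (1 - 2 * treeCountSeries R) =
      X * lengthSeries R r * (1 - treeCountSeries R) := by
  set W := forestSeries fun L => ((L.map s).sum : R)
  have hW : W = X * ((lengthSeries R r + W) * forestSeries 1 + forestSeries 1 * W) := by
    rw [lengthSeries, ← forestSeries_add]
    refine (forestSeries_eq_of_cons_add (u := fun A => (r A.length : R) + ((A.map s).sum : R))
      (v := fun B => ((B.map s).sum : R)) fun A B => ?_).trans (by simp [W])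
    simp [hs, add_assoc]
  have hsW : statSeries R s = X * (lengthSeries R r + W) := by
    simp only [statSeries, lengthSeries, W, ← forestSeries_add, hs]
    push_cast
    rfl
  rw [hsW, treeCountSeries]
  linear_combination X * hW

lemma statSeries_evenAr_mul :
    statSeries R evenAr * ((1 - 2 * treeCountSeries R) * (1 + treeCountSeries R)) = X := by
  have h := statSeries_mul_of_ofList (R := R) (r := fun k => if Even k then 1 else 0) evenAr_ofList
  linear_combination (1 + treeCountSeries R) * h + X * lengthSeries_even_mul (R := R)

lemma statSeries_oddAr_mul :
    statSeries R oddAr * ((1 - 2 * treeCountSeries R) * (1 + treeCountSeries R)) =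
      X * treeCountSeries R := by
  have h := statSeries_mul_of_ofList (R := R) (r := fun k => if ¬ Even k then 1 else 0)
    oddAr_ofList
  rw [lengthSeries_odd] at h
  linear_combination (1 + treeCountSeries R) * h +
    X * treeCountSeries R * lengthSeries_even_mul (R := R)

end Ring

end PTree6

namespace PowerSeries

variable {R : Type*} [CommRing R]

lemma eq_of_eq_X_add_sq [IsDomain R] {φ ψ : R⟦X⟧} (hφ : φ = X + φ ^ 2) (hψ : ψ = X + ψ ^ 2)
    (hφ0 : constantCoeff φ = 0) (hψ0 : constantCoeff ψ = 0) : φ = ψ := by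
  have h : (φ - ψ) * (1 - φ - ψ) = 0 := by linear_combination hφ - hψ
  have hne : 1 - φ - ψ ≠ 0 := fun h0 => by simpa [hφ0, hψ0] using congrArg constantCoeff h0
  exact sub_eq_zero.1 ((mul_eq_zero.1 h).resolve_right hne)

lemma derivative_mul_of_eq_X_add_sq {φ : R⟦X⟧} (hφ : φ = X + φ ^ 2) :
    d⁄dX R φ * (1 - 2 * φ) = 1 := by
  have h := congrArg (d⁄dX R) hφ
  simp only [map_add, derivative_X, pow_two, Derivation.leibniz, smul_eq_mul] at h
  linear_combination h

lemma mk_eq_X_add_sq_of_catalan_rec {S : Type*} [CommSemiring S] (c : ℕ → ℕ) (hc1 : c 1 = 1)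
    (hrec : ∀ n, 2 ≤ n → c n = ∑ l ∈ Finset.Ico 1 n, c l * c (n - l)) :
    (mk fun n => if n = 0 then 0 else (c n : S)) =
      X + (mk fun n => if n = 0 then 0 else (c n : S)) ^ 2 := by
  ext (_ | _ | n)
  · simp
  · simp [hc1, sq, coeff_mul, Finset.Nat.antidiagonal_succ]
  · rw [map_add, coeff_X, if_neg (by omega), zero_add, sq, coeff_mul,
      Finset.Nat.sum_antidiagonal_eq_sum_range_succ_mk, Finset.sum_range_succ,
      Finset.sum_range_succ', coeff_mk, if_neg (by omega), hrec _ (by omega),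
      Finset.sum_Ico_eq_sum_range]
    simp only [coeff_mk]
    push_cast
    simp only [if_true, mul_zero, add_zero, Nat.sub_self, zero_mul]
    refine Finset.sum_congr rfl fun l hl => ?_
    rw [Finset.mem_range] at hl
    rw [add_comm 1 l, show n + 1 + 1 - (l + 1) = n + 1 - l by omega, if_neg (by omega)]

end PowerSeries

open PowerSeries in
/-- Comparing the coefficients of `X¹, …, X⁷` gives a triangular linear system for
`O 1, …, O 7`. -/
lemma first_values_of_mul_eq (c O : ℕ → ℕ) (hc1 : c 1 = 1)
    (hrec : ∀ n, 2 ≤ n → c n = ∑ l ∈ Finset.Ico 1 n, c l * c (n - l)) (hO0 : O 0 = 0)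
    (h : (mk fun n => (O n : ℚ)) *
        (1 + (2 : ℚ) • X - (3 : ℚ) • mk fun n => if n = 0 then 0 else (c n : ℚ)) =
      X * mk fun n => if n = 0 then 0 else (c n : ℚ)) :
    O 1 = 0 ∧ O 2 = 1 ∧ O 3 = 2 ∧ O 4 = 7 ∧ O 5 = 24 ∧ O 6 = 86 ∧ O 7 = 314 := by
  have hc : c 2 = 1 ∧ c 3 = 2 ∧ c 4 = 5 ∧ c 5 = 14 ∧ c 6 = 42 := by
    simp [hrec, hc1, Finset.sum_Ico_succ_top]
  have e n := congrArg (coeff n) h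
  simp only [mul_sub, mul_add, mul_smul_comm, map_sub, map_add, map_smul, coeff_mul] at e
  have e1 := e 1; have e2 := e 2; have e3 := e 3; have e4 := e 4
  have e5 := e 5; have e6 := e 6; have e7 := e 7
  simp [Finset.Nat.antidiagonal_succ, hO0, hc1, hc, coeff_X] at e1 e2 e3 e4 e5 e6 e7
  qify at e1 ⊢
  refine ⟨e1, ?_, ?_, ?_, ?_, ?_, ?_⟩ <;> linarith

open PTree6

theorem stmt6_general (c : ℕ → ℕ) (hc1 : c 1 = 1)
    (hrec : ∀ n, 2 ≤ n → c n = ∑ l ∈ Finset.Ico 1 n, c l * c (n - l))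
    (f : PowerSeries ℚ)
    (hf : f = PowerSeries.mk fun n => if n = 0 then 0 else (c n : ℚ))
    (c' : ℕ → ℚ)
    (hc' : (PowerSeries.mk fun n => c' n) * (1 + f) =
      PowerSeries.X * PowerSeries.derivativeFun f)
    (O : ℕ → ℕ) (hO0 : O 0 = 0)
    (hO : ∀ n, 1 ≤ n → ∀ Tset : Finset PTree6, (∀ t, t ∈ Tset ↔ t.vcount = n) →
      O n = ∑ t ∈ Tset, t.oddAr) :
    (∀ n, 1 ≤ n → ∀ Tset : Finset PTree6, (∀ t, t ∈ Tset ↔ t.vcount = n) →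
      ((∑ t ∈ Tset, t.evenAr : ℚ) = c' n)) ∧
    (∀ s : PowerSeries ℚ, s ^ 2 = 1 - 4 * PowerSeries.X →
      PowerSeries.constantCoeff s = 1 →
      (PowerSeries.mk fun n => (O n : ℚ)) * ((3 - s) * s) =
        PowerSeries.X * (1 - s)) ∧
    O 1 = 0 ∧ O 2 = 1 ∧ O 3 = 2 ∧ O 4 = 7 ∧ O 5 = 24 ∧ O 6 = 86 ∧ O 7 = 314 := by
  set T := treeCountSeries ℚ
  have hT : T = X + T ^ 2 := treeCountSeries_eq_X_add_sq
  have hT0 : constantCoeff T = 0 := constantCoeff_treeCountSeries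
  obtain rfl : f = T := hf ▸ eq_of_eq_X_add_sq (mk_eq_X_add_sq_of_catalan_rec c hc1 hrec)
    hT (by simp) hT0
  have hne : (1 - 2 * T) * (1 + T) ≠ 0 := fun h => by
    simpa [hT0] using congrArg constantCoeff h
  have hE : mk c' = statSeries ℚ evenAr := mul_right_cancel₀ hne <| by
    change _ = X * d⁄dX ℚ T at hc'
    linear_combination (1 - 2 * T) * hc' + X * derivative_mul_of_eq_X_add_sq hT
      - statSeries_evenAr_mul (R := ℚ)
  have hO' : (mk fun n => (O n : ℚ)) = statSeries ℚ oddAr := mk_eq_statSeries hO0 hO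
  refine ⟨fun n hn Tset hTset => ?_, fun s hs hs1 => ?_, ?_⟩
  · obtain ⟨m, rfl⟩ : ∃ m, n = m + 1 := ⟨n - 1, by omega⟩
    rw [← coeff_mk (m + 1) c', hE, coeff_succ_statSeries evenAr hTset]
  · obtain rfl : s = 1 - 2 * T :=
      (sq_eq_sq_iff_eq_or_eq_neg.1 (by linear_combination hs + 4 * hT)).resolve_right fun h => by
        have := congrArg constantCoeff h
        norm_num [hs1, hT0] at this
    rw [hO']
    linear_combination 2 * statSeries_oddAr_mul (R := ℚ)
  · refine first_values_of_mul_eq c O hc1 hrec hO0 ?_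
    rw [← hf, hO']
    simp only [Algebra.smul_def, map_ofNat]
    linear_combination statSeries_oddAr_mul (R := ℚ) - 2 * statSeries ℚ oddAr * hT

/-- In the set of all planar rooted trees with `n` vertices, the total
number of vertices with even arity equals the `n`-th log-Catalan number `c'_n`.
Equivalently, the generating series of the total number of odd-arity vertices over
all planar rooted trees with `n` vertices equals `t(1-√(1-4t))/((3-√(1-4t))√(1-4t))`,
with coefficients `0, 1, 2, 7, 24, 86, 314, …`. -/
theorem stmt6 (c : ℕ → ℕ) (hc1 : c 1 = 1)
    (hrec : ∀ n, 2 ≤ n → c n = ∑ l ∈ Finset.Ico 1 n, c l * c (n - l))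
    (f : PowerSeries ℚ)
    (hf : f = PowerSeries.mk fun n => if n = 0 then 0 else (c n : ℚ))
    (c' : ℕ → ℚ) (hc'0 : c' 0 = 0)
    (hc' : (PowerSeries.mk fun n => c' n) * (1 + f) =
      PowerSeries.X * PowerSeries.derivativeFun f)
    (O : ℕ → ℕ) (hO0 : O 0 = 0)
    (hO : ∀ n, 1 ≤ n → ∀ Tset : Finset PTree6, (∀ t, t ∈ Tset ↔ t.vcount = n) →
      O n = ∑ t ∈ Tset, t.oddAr) :
    (∀ n, 1 ≤ n → ∀ Tset : Finset PTree6, (∀ t, t ∈ Tset ↔ t.vcount = n) →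
      ((∑ t ∈ Tset, t.evenAr : ℚ) = c' n)) ∧
    (∀ s : PowerSeries ℚ, s ^ 2 = 1 - 4 * PowerSeries.X →
      PowerSeries.constantCoeff s = 1 →
      (PowerSeries.mk fun n => (O n : ℚ)) * ((3 - s) * s) =
        PowerSeries.X * (1 - s)) ∧
    O 1 = 0 ∧ O 2 = 1 ∧ O 3 = 2 ∧ O 4 = 7 ∧ O 5 = 24 ∧ O 6 = 86 ∧ O 7 = 314 :=
  stmt6_general c hc1 hrec f hf c' hc' O hO0 hO
end

section
/- For a planar binary tree monomial T in the free unital magma algebra K{X}, the diagonal satisfies Δ_a(T) = ∑_{I ⊆ Le(T)} red(T|I) ⊗ red(T|I^c), where the sum is over all subsets I of the leaf set of T, red(T|I) is the tree obtained by restricting T to paths from leaves in I to the root and contracting unary vertices, and red(T|∅) = 1. -/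
noncomputable section

/-- Basis of the free unital magma algebra on `X`. -/
abbrev MagW (X : Type) := WithOne (FreeMagma X)

/-- The free unital magma algebra `K{X}`. -/
abbrev MagA (K X : Type) [Semiring K] := MagW X →₀ K

/-- The (non-associative) convolution product on `K{X}`. -/
def mulA {K X : Type} [Semiring K] (f g : MagA K X) : MagA K X :=
  f.sum fun a c => g.sum fun b d => Finsupp.single (a * b) (c * d)

/-- The componentwise product on `K{X} ⊗ K{X}`. -/
def mulA2 {K X : Type} [Semiring K] (f g : (MagW X × MagW X) →₀ K) :
    (MagW X × MagW X) →₀ K :=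
  f.sum fun a c => g.sum fun b d => Finsupp.single (a.1 * b.1, a.2 * b.2) (c * d)

/-- The number of leaves of a planar binary tree (free magma monomial); the leaves of
`T` are numbered `0, 1, …, nl T - 1` from left to right. -/
def nl {X : Type} : FreeMagma X → ℕ
  | .of _ => 1
  | .mul a b => nl a + nl b

/-- `red T I`: the restriction of the planar binary tree `T` to the set `I` of its
leaves, obtained by deleting every vertex and edge not lying on a path from a leaf in
`I` to the root and contracting the resulting unary vertices; the result is a tree, or
the unit `1` if `I` contains no leaf of `T` (multiplication in `WithOne (FreeMagma X)`
performs the required contractions). -/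
def red {X : Type} : FreeMagma X → Finset ℕ → MagW X
  | .of x, I => if 0 ∈ I then (↑(FreeMagma.of x) : MagW X) else 1
  | .mul a b, I =>
      red a (I.filter (· < nl a)) * red b ((I.filter (nl a ≤ ·)).image (· - nl a))

lemma mulA_single {K X : Type} [Semiring K] (a b : MagW X) (c d : K) :
    mulA (Finsupp.single a c) (Finsupp.single b d) = Finsupp.single (a * b) (c * d) := by
  unfold mulA
  rw [Finsupp.sum_single_index, Finsupp.sum_single_index]
  · simp
  · simp [Finsupp.sum_single_index]

lemma mulA2_single {K X : Type} [Semiring K] (a b : MagW X × MagW X) (c d : K) :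
    mulA2 (Finsupp.single a c) (Finsupp.single b d) =
      Finsupp.single (a.1 * b.1, a.2 * b.2) (c * d) := by
  unfold mulA2
  rw [Finsupp.sum_single_index, Finsupp.sum_single_index]
  · simp
  · simp [Finsupp.sum_single_index]

lemma mulA2_zero_left {K X : Type} [Semiring K] (g : (MagW X × MagW X) →₀ K) :
    mulA2 0 g = 0 := by
  unfold mulA2; exact Finsupp.sum_zero_index

lemma mulA2_zero_right {K X : Type} [Semiring K] (f : (MagW X × MagW X) →₀ K) :
    mulA2 f 0 = 0 := by
  unfold mulA2; simp

lemma mulA2_add_left {K X : Type} [Semiring K] (f g h : (MagW X × MagW X) →₀ K) :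
    mulA2 (f + g) h = mulA2 f h + mulA2 g h := by
  unfold mulA2
  apply Finsupp.sum_add_index'
  · intro a; simp
  · intro a b₁ b₂; simp [add_mul, Finsupp.single_add, Finsupp.sum_add]

lemma mulA2_add_right {K X : Type} [Semiring K] (f g h : (MagW X × MagW X) →₀ K) :
    mulA2 f (g + h) = mulA2 f g + mulA2 f h := by
  unfold mulA2
  rw [← Finsupp.sum_add]
  apply Finsupp.sum_congr
  intro a _
  apply Finsupp.sum_add_index'
  · intro b; simp
  · intro b d₁ d₂; simp [mul_add, Finsupp.single_add]

lemma mulA2_sum_left {K X ι : Type} [Semiring K] (s : Finset ι)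
    (f : ι → (MagW X × MagW X) →₀ K) (g : (MagW X × MagW X) →₀ K) :
    mulA2 (∑ i ∈ s, f i) g = ∑ i ∈ s, mulA2 (f i) g := by
  induction s using Finset.cons_induction with
  | empty => simp [mulA2_zero_left]
  | cons i s hi ih => simp [Finset.sum_cons, mulA2_add_left, ih]

lemma mulA2_sum_right {K X ι : Type} [Semiring K] (s : Finset ι)
    (f : (MagW X × MagW X) →₀ K) (g : ι → (MagW X × MagW X) →₀ K) :
    mulA2 f (∑ i ∈ s, g i) = ∑ i ∈ s, mulA2 f (g i) := by
  induction s using Finset.cons_induction with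
  | empty => simp [mulA2_zero_right]
  | cons i s hi ih => simp [Finset.sum_cons, mulA2_add_right, ih]

section
open Finset
lemma compl_filter_lt (m n : ℕ) (I : Finset ℕ) :
    ((range (m + n)) \ I).filter (· < m) = range m \ I.filter (· < m) := by
  ext x
  simp only [mem_filter, mem_sdiff, mem_range]
  by_cases h : x ∈ I <;> simp [h] <;> omega

lemma compl_filter_ge (m n : ℕ) (I : Finset ℕ) :
    (((range (m + n)) \ I).filter (m ≤ ·)).image (· - m) =
      range n \ (I.filter (m ≤ ·)).image (· - m) := by
  ext y
  simp only [mem_image, mem_filter, mem_sdiff, mem_range]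
  constructor
  · rintro ⟨x, ⟨⟨hx1, hx2⟩, hx3⟩, rfl⟩
    refine ⟨by omega, ?_⟩
    rintro ⟨z, ⟨hz1, hz2⟩, hz3⟩
    have : z = x := by omega
    exact hx2 (this ▸ hz1)
  · rintro ⟨hy, hy2⟩
    refine ⟨y + m, ⟨⟨by omega, fun h => hy2 ⟨y + m, ⟨h, by omega⟩, by omega⟩⟩, by omega⟩, by omega⟩

lemma split_join (m n : ℕ) (I : Finset ℕ) (hI : I ⊆ range (m + n)) :
    (I.filter (· < m)) ∪ ((I.filter (m ≤ ·)).image (· - m)).image (· + m) = I := by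
  ext x
  simp only [mem_union, mem_image, mem_filter]
  constructor
  · rintro (⟨h, _⟩ | ⟨y, ⟨z, ⟨hz, hz2⟩, rfl⟩, rfl⟩)
    · exact h
    · have hz' : z - m + m = z := by omega
      rw [hz']; exact hz
  · intro h
    by_cases hx : x < m
    · exact Or.inl ⟨h, hx⟩
    · exact Or.inr ⟨x - m, ⟨x, ⟨h, by omega⟩, rfl⟩, by omega⟩

lemma join_split₁ (m n : ℕ) (J₁ J₂ : Finset ℕ) (h₁ : J₁ ⊆ range m) :
    (J₁ ∪ J₂.image (· + m)).filter (· < m) = J₁ := by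
  ext x
  simp only [mem_filter, mem_union, mem_image]
  constructor
  · rintro ⟨h | ⟨y, hy, rfl⟩, hx⟩
    · exact h
    · omega
  · intro h; exact ⟨Or.inl h, by have := h₁ h; simpa [mem_range] using this⟩

lemma join_split₂ (m n : ℕ) (J₁ J₂ : Finset ℕ) (h₁ : J₁ ⊆ range m) :
    ((J₁ ∪ J₂.image (· + m)).filter (m ≤ ·)).image (· - m) = J₂ := by
  ext y
  simp only [mem_image, mem_filter, mem_union]
  constructor
  · rintro ⟨x, ⟨h | ⟨z, hz, rfl⟩, hx⟩, rfl⟩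
    · have := h₁ h; simp [mem_range] at this; omega
    · simpa using hz
  · intro h
    exact ⟨y + m, ⟨Or.inr ⟨y, h, rfl⟩, by omega⟩, by omega⟩

lemma split_sum {M : Type*} [AddCommMonoid M] (m n : ℕ) (f : Finset ℕ → Finset ℕ → M) :
    ∑ I ∈ (range (m + n)).powerset,
        f (I.filter (· < m)) ((I.filter (m ≤ ·)).image (· - m)) =
      ∑ J₁ ∈ (range m).powerset, ∑ J₂ ∈ (range n).powerset, f J₁ J₂ := by
  rw [← Finset.sum_product']
  apply Finset.sum_nbij'
    (i := fun I => (I.filter (· < m), (I.filter (m ≤ ·)).image (· - m)))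
    (j := fun p => p.1 ∪ p.2.image (· + m))
  · intro I hI
    simp only [mem_powerset] at hI
    simp only [mem_product, mem_powerset]
    constructor
    · intro x hx; simp only [mem_filter] at hx; simp [mem_range]; omega
    · intro y hy
      simp only [mem_image, mem_filter] at hy
      obtain ⟨x, ⟨hx1, hx2⟩, rfl⟩ := hy
      have := hI hx1; simp [mem_range] at this ⊢; omega
  · intro p hp
    simp only [mem_product, mem_powerset] at hp
    simp only [mem_powerset]
    intro x hx
    rcases mem_union.mp hx with h | h
    · have := hp.1 h; simp [mem_range] at this ⊢; omega
    · simp only [mem_image] at h; obtain ⟨y, hy, rfl⟩ := h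
      have := hp.2 hy; simp [mem_range] at this ⊢; omega
  · intro I hI
    exact split_join m n I (mem_powerset.mp hI)
  · intro p hp
    simp only [mem_product, mem_powerset] at hp
    exact Prod.ext (join_split₁ m n p.1 p.2 hp.1) (join_split₂ m n p.1 p.2 hp.1)
  · intro I _; rfl

end

/-- For a planar binary tree monomial `T` in the free unital magma algebra
`K{X}`, the diagonal satisfies `Δ_a(T) = ∑_{I ⊆ Le(T)} red(T|I) ⊗ red(T|I^c)`, the sum
ranging over all subsets `I` of the leaf set of `T`. -/
theorem stmt9 (K X : Type) [Field K] [CharZero K]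
    (Δ : MagA K X →ₗ[K] ((MagW X × MagW X) →₀ K))
    (hΔ1 : Δ (Finsupp.single 1 1) = Finsupp.single (1, 1) 1)
    (hΔmul : ∀ f g : MagA K X, Δ (mulA f g) = mulA2 (Δ f) (Δ g))
    (hΔx : ∀ x : X, Δ (Finsupp.single (↑(FreeMagma.of x)) 1) =
      Finsupp.single ((↑(FreeMagma.of x) : MagW X), (1 : MagW X)) 1 +
        Finsupp.single ((1 : MagW X), (↑(FreeMagma.of x) : MagW X)) 1) :
    ∀ T : FreeMagma X,
      Δ (Finsupp.single (↑T) 1) =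
        ∑ I ∈ (Finset.range (nl T)).powerset,
          Finsupp.single (red T I, red T ((Finset.range (nl T)) \ I)) (1 : K) := by
  intro T
  induction T using FreeMagma.rec with
  | of x =>
      rw [hΔx]
      have h1 : (Finset.range (nl (FreeMagma.of x))).powerset =
          ({∅, {0}} : Finset (Finset ℕ)) := by
        show (Finset.range 1).powerset = _
        rw [Finset.range_one]
        rfl
      rw [h1, Finset.sum_insert (by decide), Finset.sum_singleton]
      have e1 : red (FreeMagma.of x) ∅ = 1 := by simp [red]
      have e2 : red (FreeMagma.of x) {0} = (↑(FreeMagma.of x) : MagW X) := by simp [red]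
      have e3 : Finset.range (nl (FreeMagma.of x)) \ (∅ : Finset ℕ) = {0} := by
        show Finset.range 1 \ ∅ = _; simp [Finset.range_one]
      have e4 : Finset.range (nl (FreeMagma.of x)) \ ({0} : Finset ℕ) = ∅ := by
        show Finset.range 1 \ {0} = _; simp [Finset.range_one]
      rw [e3, e4, e1, e2, add_comm]
  | mul a b iha ihb =>
      have key : (Finsupp.single (↑(a.mul b)) (1 : K) : MagA K X) =
          mulA (Finsupp.single (↑a) 1) (Finsupp.single (↑b) 1) := by
        rw [mulA_single, mul_one]
        rfl
      rw [key, hΔmul, iha, ihb, mulA2_sum_left]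
      have lhs_eq : ∀ J₁ ∈ (Finset.range (nl a)).powerset,
          mulA2 (Finsupp.single (red a J₁, red a (Finset.range (nl a) \ J₁)) (1 : K))
            (∑ J₂ ∈ (Finset.range (nl b)).powerset,
              Finsupp.single (red b J₂, red b (Finset.range (nl b) \ J₂)) (1 : K)) =
          ∑ J₂ ∈ (Finset.range (nl b)).powerset,
            Finsupp.single (red a J₁ * red b J₂,
              red a (Finset.range (nl a) \ J₁) * red b (Finset.range (nl b) \ J₂)) (1 : K) := by
        intro J₁ _
        rw [mulA2_sum_right]
        refine Finset.sum_congr rfl fun J₂ _ => ?_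
        rw [mulA2_single, mul_one]
      rw [Finset.sum_congr rfl lhs_eq]
      have hnl : nl (a.mul b) = nl a + nl b := rfl
      rw [show (∑ I ∈ (Finset.range (nl (a.mul b))).powerset,
          Finsupp.single (red (a.mul b) I,
            red (a.mul b) (Finset.range (nl (a.mul b)) \ I)) (1 : K)) =
        ∑ I ∈ (Finset.range (nl a + nl b)).powerset,
          Finsupp.single
            (red a (I.filter (· < nl a)) * red b ((I.filter (nl a ≤ ·)).image (· - nl a)),
             red a (Finset.range (nl a) \ I.filter (· < nl a)) *
               red b (Finset.range (nl b) \ (I.filter (nl a ≤ ·)).image (· - nl a))) (1 : K)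
        from Finset.sum_congr (by rw [hnl]) fun I _ => by
          show Finsupp.single (red (a.mul b) I,
              red (a.mul b) (Finset.range (nl a + nl b) \ I)) (1 : K) = _
          rw [show red (a.mul b) I = red a (I.filter (· < nl a)) *
              red b ((I.filter (nl a ≤ ·)).image (· - nl a)) from rfl,
            show red (a.mul b) (Finset.range (nl a + nl b) \ I) =
              red a ((Finset.range (nl a + nl b) \ I).filter (· < nl a)) *
              red b (((Finset.range (nl a + nl b) \ I).filter (nl a ≤ ·)).image (· - nl a))
              from rfl,
            compl_filter_lt, compl_filter_ge]]
      exact (split_sum (nl a) (nl b) fun J₁ J₂ =>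
        Finsupp.single (red a J₁ * red b J₂,
          red a (Finset.range (nl a) \ J₁) * red b (Finset.range (nl b) \ J₂)) (1 : K)).symm


end
end

section
/- Let f be a homogeneous element of degree n in the free unital magma algebra K{X} with diagonal Δ_a. Then f is primitive (Δ_a(f) = f⊗1 + 1⊗f) if and only if ∂_T(f) = 0 for all tree monomials T of degree d with 1 ≤ d < (n+1)/2. -/
/-!
Multiplicativity reduces everything to the unit, the generators and products of tree monomials,
where one checks that `Δ` is cocommutative, counital (`Δ f (s, 1) = f s`) and preserves total
degree. For `f` homogeneous of degree `n ≥ 1`, counitality makes primitivity equivalent to the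
vanishing of the coefficients `Δ f (s, t) = ∂_s(f)(t)` at pairs of trees. Such a coefficient can
only be nonzero when `nl s + nl t = n`, and by cocommutativity we may assume `2 * nl s ≤ n`.
-/

noncomputable section

/-- Degree of a monomial of `K{X}` (number of leaves; the unit has degree 0). -/
def degW {X : Type} : MagW X → ℕ
  | 1 => 0
  | (t : FreeMagma X) => nl t

/-- `f` is homogeneous of degree `n`. -/
def Homog {K X : Type} [Semiring K] (f : MagA K X) (n : ℕ) : Prop :=
  ∀ t ∈ f.support, degW t = n

/-- `f` is primitive: `Δ(f) = f ⊗ 1 + 1 ⊗ f`. -/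
def IsPrim {K X : Type} [Semiring K]
    (Δ : MagA K X →ₗ[K] ((MagW X × MagW X) →₀ K)) (f : MagA K X) : Prop :=
  Δ f = f.mapDomain (fun a => (a, (1 : MagW X))) +
    f.mapDomain (fun a => ((1 : MagW X), a))

open Finsupp

theorem WithOne.mul_eq_one_iff {α : Type*} [Mul α] {u v : WithOne α} :
    u * v = 1 ↔ u = 1 ∧ v = 1 := by
  induction u using WithOne.recOneCoe with
  | one => simp
  | coe a =>
    induction v using WithOne.recOneCoe with
    | one => simp
    | coe b => simp [← WithOne.coe_mul]

section Degree

variable {X : Type}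

theorem one_le_nl (t : FreeMagma X) : 1 ≤ nl t := by
  induction t with
  | ih1 => exact le_rfl
  | ih2 a b iha _ => exact iha.trans (Nat.le_add_right _ _)

theorem degW_one : degW (1 : MagW X) = 0 := rfl

theorem degW_coe (t : FreeMagma X) : degW (t : MagW X) = nl t := rfl

theorem degW_mul (u v : MagW X) : degW (u * v) = degW u + degW v := by
  induction u using WithOne.recOneCoe with
  | one => simp [degW_one]
  | coe a =>
    induction v using WithOne.recOneCoe with
    | one => simp [degW_one]
    | coe b => rfl

theorem MagW.induction {P : MagW X → Prop} (one : P 1)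
    (of : ∀ x, P ((FreeMagma.of x : FreeMagma X) : MagW X))
    (mul : ∀ u v, P u → P v → P (u * v)) (w : MagW X) : P w := by
  induction w using WithOne.recOneCoe with
  | one => exact one
  | coe t =>
    induction t with
    | ih1 x => exact of x
    | ih2 a b ha hb => exact WithOne.coe_mul a b ▸ mul _ _ ha hb

end Degree

section Products

variable {K X : Type} [Semiring K]

theorem Homog.apply_eq_zero {f : MagA K X} {n : ℕ} (hf : Homog f n) {w : MagW X}
    (hw : degW w ≠ n) : f w = 0 :=
  notMem_support_iff.mp fun h => hw (hf w h)

theorem mulA_single_single (u v : MagW X) (c d : K) :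
    mulA (single u c) (single v d) = single (u * v) (c * d) := by
  simp [mulA]

theorem mulA_add_left (f f' g : MagA K X) : mulA (f + f') g = mulA f g + mulA f' g := by
  simp [mulA, sum_add_index', add_mul, single_add, sum_add]

theorem mulA_add_right (f g g' : MagA K X) : mulA f (g + g') = mulA f g + mulA f g' := by
  simp [mulA, sum_add_index', mul_add, single_add, sum_add]

theorem mulA2_single_single (a b : MagW X × MagW X) (c d : K) :
    mulA2 (single a c) (single b d) = single (a.1 * b.1, a.2 * b.2) (c * d) := by
  simp [mulA2]

theorem mulA2_add_left_s11 (F F' G : (MagW X × MagW X) →₀ K) :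
    mulA2 (F + F') G = mulA2 F G + mulA2 F' G := by
  simp [mulA2, sum_add_index', add_mul, single_add, sum_add]

theorem mulA2_add_right_s11 (F G G' : (MagW X × MagW X) →₀ K) :
    mulA2 F (G + G') = mulA2 F G + mulA2 F G' := by
  simp [mulA2, sum_add_index', mul_add, single_add, sum_add]

theorem mapDomain_swap_mulA2 (F G : (MagW X × MagW X) →₀ K) :
    mapDomain Prod.swap (mulA2 F G) =
      mulA2 (mapDomain Prod.swap F) (mapDomain Prod.swap G) := by
  unfold mulA2
  rw [mapDomain_sum, sum_mapDomain_index_inj Prod.swap_injective]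
  refine sum_congr fun u _ => ?_
  rw [mapDomain_sum, sum_mapDomain_index_inj Prod.swap_injective]
  refine sum_congr fun v _ => ?_
  rw [mapDomain_single]
  rfl

theorem mulA2_mem_supported {F G : (MagW X × MagW X) →₀ K} {m n : ℕ}
    (hF : F ∈ supported K K {p | degW p.1 + degW p.2 = m})
    (hG : G ∈ supported K K {p | degW p.1 + degW p.2 = n}) :
    mulA2 F G ∈ supported K K {p | degW p.1 + degW p.2 = m + n} := by
  refine Submodule.sum_mem _ fun a ha => Submodule.sum_mem _ fun b hb => ?_
  refine single_mem_supported K _ ?_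
  have ha' : degW a.1 + degW a.2 = m := (mem_supported K F).mp hF ha
  have hb' : degW b.1 + degW b.2 = n := (mem_supported K G).mp hG hb
  simp only [Set.mem_ofPred_eq, degW_mul]
  omega

variable (K X) in
/-- The map `id ⊗ ε`, where the counit `ε` reads off the coefficient of `1`. -/
def restrictRightOne : ((MagW X × MagW X) →₀ K) →ₗ[K] MagA K X :=
  lcomapDomain (fun a => (a, 1)) fun _ _ h => congrArg Prod.fst h

theorem restrictRightOne_apply (F : (MagW X × MagW X) →₀ K) (s : MagW X) :
    restrictRightOne K X F s = F (s, 1) :=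
  rfl

theorem restrictRightOne_single_one (a : MagW X) (c : K) :
    restrictRightOne K X (single (a, 1) c) = single a c :=
  comapDomain_single _ a c _

theorem restrictRightOne_single_of_ne {p : MagW X × MagW X} (hp : p.2 ≠ 1) (c : K) :
    restrictRightOne K X (single p c) = 0 :=
  comapDomain_single_of_not_mem_range (by rintro ⟨a, rfl⟩; exact hp rfl) _ _

theorem restrictRightOne_mulA2 (F G : (MagW X × MagW X) →₀ K) :
    restrictRightOne K X (mulA2 F G) =
      mulA (restrictRightOne K X F) (restrictRightOne K X G) := by
  induction F using induction_linear with
  | zero => simp [mulA, mulA2]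
  | add F F' hF hF' => rw [mulA2_add_left_s11, map_add, map_add, mulA_add_left, hF, hF']
  | single a c =>
    induction G using induction_linear with
    | zero => simp [mulA, mulA2]
    | add G G' hG hG' => rw [mulA2_add_right_s11, map_add, map_add, mulA_add_right, hG, hG']
    | single b d =>
      obtain ⟨a, a₂⟩ := a
      obtain ⟨b, b₂⟩ := b
      rw [mulA2_single_single]
      by_cases ha : a₂ = 1
      · subst ha
        by_cases hb : b₂ = 1
        · subst hb
          simp only [mul_one, restrictRightOne_single_one, mulA_single_single]
        · rw [restrictRightOne_single_of_ne (by simpa using hb),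
            restrictRightOne_single_of_ne (p := (b, b₂)) hb]
          simp [mulA]
      · rw [restrictRightOne_single_of_ne (by simp [WithOne.mul_eq_one_iff, ha]),
          restrictRightOne_single_of_ne (p := (a, a₂)) ha]
        simp [mulA]

end Products


structure IsMagmaDiagonal {K X : Type} [Semiring K]
    (Δ : MagA K X →ₗ[K] ((MagW X × MagW X) →₀ K)) : Prop where
  map_one : Δ (single 1 1) = single (1, 1) 1
  map_mul : ∀ f g : MagA K X, Δ (mulA f g) = mulA2 (Δ f) (Δ g)
  map_of : ∀ x : X, Δ (single (↑(FreeMagma.of x)) 1) =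
    single ((↑(FreeMagma.of x) : MagW X), (1 : MagW X)) 1 +
      single ((1 : MagW X), (↑(FreeMagma.of x) : MagW X)) 1

namespace IsMagmaDiagonal

variable {K X : Type} [Semiring K] {Δ : MagA K X →ₗ[K] ((MagW X × MagW X) →₀ K)}

theorem map_single_mul (hΔ : IsMagmaDiagonal Δ) (u v : MagW X) :
    Δ (single (u * v) 1) = mulA2 (Δ (single u 1)) (Δ (single v 1)) := by
  rw [← hΔ.map_mul, mulA_single_single, one_mul]

theorem lmapDomain_swap_comp (hΔ : IsMagmaDiagonal Δ) :
    (lmapDomain K K Prod.swap).comp Δ = Δ := by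
  refine lhom_ext' fun w => LinearMap.ext_ring ?_
  simp only [LinearMap.comp_apply, lsingle_apply, lmapDomain_apply]
  induction w using MagW.induction with
  | one => rw [hΔ.map_one, mapDomain_single]; rfl
  | of x => rw [hΔ.map_of, mapDomain_add, mapDomain_single, mapDomain_single, add_comm]; rfl
  | mul u v hu hv => rw [hΔ.map_single_mul, mapDomain_swap_mulA2, hu, hv]

theorem apply_swap (hΔ : IsMagmaDiagonal Δ) (f : MagA K X) (s t : MagW X) :
    Δ f (t, s) = Δ f (s, t) := by
  conv_lhs => rw [← hΔ.lmapDomain_swap_comp]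
  exact mapDomain_apply Prod.swap_injective _ (s, t)

theorem restrictRightOne_comp (hΔ : IsMagmaDiagonal Δ) :
    restrictRightOne K X ∘ₗ Δ = LinearMap.id := by
  refine lhom_ext' fun w => LinearMap.ext_ring ?_
  simp only [LinearMap.comp_apply, lsingle_apply, LinearMap.id_apply]
  induction w using MagW.induction with
  | one => rw [hΔ.map_one, restrictRightOne_single_one]
  | of x =>
    rw [hΔ.map_of, map_add, restrictRightOne_single_one,
      restrictRightOne_single_of_ne WithOne.coe_ne_one, add_zero]
  | mul u v hu hv =>
    rw [hΔ.map_single_mul, restrictRightOne_mulA2, hu, hv, mulA_single_single, one_mul]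

theorem apply_right_one (hΔ : IsMagmaDiagonal Δ) (f : MagA K X) (s : MagW X) :
    Δ f (s, 1) = f s := by
  rw [← restrictRightOne_apply, ← LinearMap.comp_apply, hΔ.restrictRightOne_comp,
    LinearMap.id_apply]

theorem apply_one_left (hΔ : IsMagmaDiagonal Δ) (f : MagA K X) (t : MagW X) :
    Δ f (1, t) = f t := by
  rw [hΔ.apply_swap, hΔ.apply_right_one]

theorem map_single_mem_supported (hΔ : IsMagmaDiagonal Δ) (w : MagW X) :
    Δ (single w 1) ∈ supported K K {p | degW p.1 + degW p.2 = degW w} := by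
  induction w using MagW.induction with
  | one => rw [hΔ.map_one]; exact single_mem_supported K _ rfl
  | of x =>
    rw [hΔ.map_of]
    exact add_mem (single_mem_supported K _ rfl) (single_mem_supported K _ rfl)
  | mul u v hu hv => rw [hΔ.map_single_mul, degW_mul]; exact mulA2_mem_supported hu hv

theorem degW_add_eq_of_apply_ne_zero (hΔ : IsMagmaDiagonal Δ) {f : MagA K X} {n : ℕ}
    (hf : Homog f n) {s t : MagW X} (h : Δ f (s, t) ≠ 0) : degW s + degW t = n := by
  have hsupp : supported K K {w | degW w = n} ≤
      (supported K K {p : MagW X × MagW X | degW p.1 + degW p.2 = n}).comap Δ := by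
    rw [supported_eq_span_single, Submodule.span_le]
    rintro _ ⟨w, rfl, rfl⟩
    exact hΔ.map_single_mem_supported w
  exact (mem_supported K _).mp (hsupp ((mem_supported K f).mpr hf)) (mem_support_iff.mpr h)

theorem isPrim_iff (hΔ : IsMagmaDiagonal Δ) {f : MagA K X} (hf : f 1 = 0) :
    IsPrim Δ f ↔ ∀ s t : FreeMagma X, Δ f (s, t) = 0 := by
  have inj1 : Function.Injective fun a : MagW X => (a, (1 : MagW X)) :=
    fun _ _ h => congrArg Prod.fst h
  have inj2 : Function.Injective fun a : MagW X => ((1 : MagW X), a) :=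
    fun _ _ h => congrArg Prod.snd h
  rw [IsPrim, Finsupp.ext_iff]
  constructor
  · intro h s t
    rw [h, Finsupp.add_apply, mapDomain_of_notMem_range, mapDomain_of_notMem_range, add_zero] <;>
      simp
  · rintro h ⟨s, t⟩
    induction s using WithOne.recOneCoe <;> induction t using WithOne.recOneCoe <;>
      simp [hΔ.apply_right_one, hΔ.apply_one_left, inj1, inj2, h, hf, mapDomain_of_notMem_range]

end IsMagmaDiagonal

theorem stmt11_general (K X : Type) [Field K]
    (Δ : MagA K X →ₗ[K] ((MagW X × MagW X) →₀ K))
    (hΔ1 : Δ (Finsupp.single 1 1) = Finsupp.single (1, 1) 1)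
    (hΔmul : ∀ f g : MagA K X, Δ (mulA f g) = mulA2 (Δ f) (Δ g))
    (hΔx : ∀ x : X, Δ (Finsupp.single (↑(FreeMagma.of x)) 1) =
      Finsupp.single ((↑(FreeMagma.of x) : MagW X), (1 : MagW X)) 1 +
        Finsupp.single ((1 : MagW X), (↑(FreeMagma.of x) : MagW X)) 1)
    (dop : MagW X → (MagA K X →ₗ[K] MagA K X))
    (hdop : ∀ (f : MagA K X) (s t : MagW X), Δ f (s, t) = dop s f t)
    (f : MagA K X) (n : ℕ) (hn : 1 ≤ n) (hf : Homog f n) :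
    IsPrim Δ f ↔
      ∀ T : FreeMagma X, 1 ≤ nl T → 2 * nl T < n + 1 →
        dop (↑T) f = 0 := by
  have hΔ : IsMagmaDiagonal Δ := ⟨hΔ1, hΔmul, hΔx⟩
  rw [hΔ.isPrim_iff (hf.apply_eq_zero (by rw [degW_one]; omega))]
  constructor
  · intro h T _ hT
    ext t
    rw [← hdop, Finsupp.zero_apply]
    induction t using WithOne.recOneCoe with
    | one => rw [hΔ.apply_right_one, hf.apply_eq_zero (by rw [degW_coe]; omega)]
    | coe t => exact h T t
  · intro h s t
    by_contra hst
    have hdeg : nl s + nl t = n := hΔ.degW_add_eq_of_apply_ne_zero hf hst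
    rcases le_total (nl s) (nl t) with hle | hle
    · rw [hdop, h s (one_le_nl s) (by omega), Finsupp.zero_apply] at hst
      exact hst rfl
    · rw [← hΔ.apply_swap, hdop, h t (one_le_nl t) (by omega), Finsupp.zero_apply] at hst
      exact hst rfl

/-- Let `f` be homogeneous of degree `n ≥ 1` in the free unital magma
algebra `K{X}` with diagonal `Δ_a`. Then `f` is primitive iff `∂_T(f) = 0` for all tree
monomials `T` of degree `d` with `1 ≤ d < (n+1)/2`, where the operators `∂_T` are
defined by `Δ_a(f) = ∑_T T ⊗ ∂_T(f)`. -/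
theorem stmt11 (K X : Type) [Field K] [CharZero K]
    (Δ : MagA K X →ₗ[K] ((MagW X × MagW X) →₀ K))
    (hΔ1 : Δ (Finsupp.single 1 1) = Finsupp.single (1, 1) 1)
    (hΔmul : ∀ f g : MagA K X, Δ (mulA f g) = mulA2 (Δ f) (Δ g))
    (hΔx : ∀ x : X, Δ (Finsupp.single (↑(FreeMagma.of x)) 1) =
      Finsupp.single ((↑(FreeMagma.of x) : MagW X), (1 : MagW X)) 1 +
        Finsupp.single ((1 : MagW X), (↑(FreeMagma.of x) : MagW X)) 1)
    (dop : MagW X → (MagA K X →ₗ[K] MagA K X))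
    (hdop : ∀ (f : MagA K X) (s t : MagW X), Δ f (s, t) = dop s f t)
    (f : MagA K X) (n : ℕ) (hn : 1 ≤ n) (hf : Homog f n) :
    IsPrim Δ f ↔
      ∀ T : FreeMagma X, 1 ≤ nl T → 2 * nl T < n + 1 →
        dop (↑T) f = 0 :=
  stmt11_general K X Δ hΔ1 hΔmul hΔx dop hdop f n hn hf

end
end

section
/- Let K{X}^{*g} be the graded dual of the free unital magma algebra K{X} with diagonal Δ_a. Identifying trees T with their dual basis elements, the dual multiplication Δ_a^* is a commutative and associative product ⧢ (the planar tree shuffle product), given on tree monomials by T¹ ⧢ T² = ∑_T binom(T; T¹,T²) T, summing over all shuffles T of T¹ and T², where binom(T; T¹,T²) is the number of subsets I ⊆ Le(T) with red(T|I) = T¹ and red(T|I^c) = T². -/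
noncomputable section
open scoped Classical

namespace Stmt12Aux

/-! ### Finset combinatorics -/

lemma union_shift_subset {n m : ℕ} {I J : Finset ℕ} (hI : I ⊆ Finset.range n)
    (hJ : J ⊆ Finset.range m) : I ∪ J.image (· + n) ⊆ Finset.range (n + m) := by
  intro k hk
  simp only [Finset.mem_union, Finset.mem_image] at hk
  rcases hk with h | ⟨j, hj, rfl⟩
  · have := Finset.mem_range.mp (hI h); exact Finset.mem_range.mpr (by omega)
  · have := Finset.mem_range.mp (hJ hj); exact Finset.mem_range.mpr (by omega)

lemma filter_lt_union {n : ℕ} {I J : Finset ℕ} (hI : I ⊆ Finset.range n) :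
    (I ∪ J.image (· + n)).filter (· < n) = I := by
  ext k
  simp only [Finset.mem_filter, Finset.mem_union, Finset.mem_image]
  constructor
  · rintro ⟨h | ⟨j, hj, rfl⟩, hk⟩
    · exact h
    · omega
  · intro h
    exact ⟨Or.inl h, Finset.mem_range.mp (hI h)⟩

lemma filter_ge_union {n : ℕ} {I J : Finset ℕ} (hI : I ⊆ Finset.range n) :
    ((I ∪ J.image (· + n)).filter (n ≤ ·)).image (· - n) = J := by
  ext k
  simp only [Finset.mem_image, Finset.mem_filter, Finset.mem_union]
  constructor
  · rintro ⟨l, ⟨hl | ⟨j, hj, rfl⟩, hge⟩, rfl⟩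
    · exact absurd (Finset.mem_range.mp (hI hl)) (by omega)
    · simpa using hj
  · intro hk
    exact ⟨k + n, ⟨Or.inr ⟨k, hk, rfl⟩, by omega⟩, by omega⟩

lemma sdiff_union_shift {n m : ℕ} {I J : Finset ℕ} (hI : I ⊆ Finset.range n)
    (hJ : J ⊆ Finset.range m) :
    Finset.range (n + m) \ (I ∪ J.image (· + n)) =
      (Finset.range n \ I) ∪ ((Finset.range m \ J).image (· + n)) := by
  ext k
  simp only [Finset.mem_sdiff, Finset.mem_union, Finset.mem_image, Finset.mem_range, not_or,
    not_exists, not_and]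
  constructor
  · rintro ⟨hk, hkI, hkJ⟩
    by_cases h : k < n
    · exact Or.inl ⟨h, hkI⟩
    · refine Or.inr ⟨k - n, ⟨by omega, fun hj => hkJ (k - n) hj (by omega)⟩, by omega⟩
  · rintro (⟨hk, hkI⟩ | ⟨j, ⟨hj, hjJ⟩, rfl⟩)
    · exact ⟨by omega, hkI, fun x hx => by omega⟩
    · refine ⟨by omega, fun hmem => ?_, fun x hxJ hxe => ?_⟩
      · have := Finset.mem_range.mp (hI hmem); omega
      · have : x = j := by omega
        exact hjJ (this ▸ hxJ)

lemma union_filter_recover {n m : ℕ} {L : Finset ℕ} (hL : L ⊆ Finset.range (n + m)) :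
    (L.filter (· < n)) ∪ (((L.filter (n ≤ ·)).image (· - n)).image (· + n)) = L := by
  ext k
  simp only [Finset.mem_union, Finset.mem_filter, Finset.mem_image]
  constructor
  · rintro (⟨h, _⟩ | ⟨j, ⟨l, ⟨hl, hln⟩, rfl⟩, rfl⟩)
    · exact h
    · have h : l - n + n = l := by omega
      rwa [h]
  · intro hk
    by_cases h : k < n
    · exact Or.inl ⟨hk, h⟩
    · exact Or.inr ⟨k - n, ⟨k, ⟨hk, by omega⟩, rfl⟩, by omega⟩

lemma filter_lt_subset_range {n : ℕ} (L : Finset ℕ) : (L.filter (· < n)) ⊆ Finset.range n := by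
  intro k hk; simp only [Finset.mem_filter] at hk; exact Finset.mem_range.mpr hk.2

lemma image_sub_subset_range {n m : ℕ} {L : Finset ℕ} (hL : L ⊆ Finset.range (n + m)) :
    ((L.filter (n ≤ ·)).image (· - n)) ⊆ Finset.range m := by
  intro k hk
  simp only [Finset.mem_image, Finset.mem_filter] at hk
  obtain ⟨l, ⟨hl, hln⟩, rfl⟩ := hk
  have := Finset.mem_range.mp (hL hl)
  exact Finset.mem_range.mpr (by omega)

lemma red_mul {X : Type} {a b : FreeMagma X} {I J : Finset ℕ}
    (hI : I ⊆ Finset.range (nl a)) :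
    red (a.mul b) (I ∪ J.image (· + nl a)) = red a I * red b J := by
  rw [red, filter_lt_union hI, filter_ge_union hI]

/-! ### Finsupp helper lemmas -/

variable {K X : Type} [Field K]

lemma mulA_single (a b : MagW X) (c d : K) :
    mulA (Finsupp.single a c) (Finsupp.single b d) = Finsupp.single (a * b) (c * d) := by
  unfold mulA
  rw [Finsupp.sum_single_index (by simp), Finsupp.sum_single_index (by simp)]

lemma sum_sum_single {ι α N : Type*} [AddCommMonoid N] (s : Finset ι) (u : ι → α)
    (φ : α → K → N) (h0 : ∀ a, φ a 0 = 0) (hadd : ∀ a b₁ b₂, φ a (b₁ + b₂) = φ a b₁ + φ a b₂) :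
    (∑ i ∈ s, Finsupp.single (u i) (1 : K)).sum φ = ∑ i ∈ s, φ (u i) 1 := by
  rw [← Finsupp.sum_finset_sum_index h0 hadd]
  exact Finset.sum_congr rfl fun i _ => Finsupp.sum_single_index (h0 _)

lemma mulA2_sum_single {ι κ : Type*} (s : Finset ι) (t : Finset κ)
    (u : ι → MagW X × MagW X) (v : κ → MagW X × MagW X) :
    mulA2 (∑ i ∈ s, Finsupp.single (u i) (1 : K)) (∑ j ∈ t, Finsupp.single (v j) (1 : K)) =
      ∑ i ∈ s, ∑ j ∈ t, Finsupp.single ((u i).1 * (v j).1, (u i).2 * (v j).2) (1 : K) := by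
  unfold mulA2
  rw [sum_sum_single s u _ (fun a => by simp)
    (fun a b₁ b₂ => by simp [add_mul, Finsupp.single_add, Finsupp.sum_add])]
  refine Finset.sum_congr rfl fun i _ => ?_
  rw [sum_sum_single t v _ (fun a => by simp)
    (fun a b₁ b₂ => by simp [mul_add, Finsupp.single_add])]
  simp

/-! ### The explicit formula for `Δ` on tree monomials -/

lemma lemA (Δ : MagA K X →ₗ[K] ((MagW X × MagW X) →₀ K))
    (hΔmul : ∀ f g : MagA K X, Δ (mulA f g) = mulA2 (Δ f) (Δ g))
    (hΔx : ∀ x : X, Δ (Finsupp.single (↑(FreeMagma.of x)) 1) =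
      Finsupp.single ((↑(FreeMagma.of x) : MagW X), (1 : MagW X)) 1 +
        Finsupp.single ((1 : MagW X), (↑(FreeMagma.of x) : MagW X)) 1) :
    ∀ T : FreeMagma X, Δ (Finsupp.single (↑T) 1) =
      ∑ I ∈ (Finset.range (nl T)).powerset,
        Finsupp.single (red T I, red T (Finset.range (nl T) \ I)) (1 : K) := by
  intro T
  induction T with
  | ih1 x =>
      rw [hΔx]
      have h1 : nl (FreeMagma.of x) = 1 := rfl
      rw [h1, Finset.range_one,
        show ({0} : Finset ℕ).powerset = insert ∅ {{0}} from rfl]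
      rw [Finset.sum_insert (by decide), Finset.sum_singleton]
      simp [red]
      abel
  | ih2 a b iha ihb =>
      have hs : (Finsupp.single (↑(a.mul b)) (1 : K) : MagA K X)
          = mulA (Finsupp.single (↑a) 1) (Finsupp.single (↑b) 1) := by
        rw [mulA_single, one_mul]; rfl
      rw [show (a * b : FreeMagma X) = a.mul b from rfl, hs, hΔmul, iha, ihb, mulA2_sum_single]
      have hnm : nl (a.mul b) = nl a + nl b := rfl
      rw [hnm, ← Finset.sum_product']
      refine Finset.sum_bij' (fun p _ => p.1 ∪ p.2.image (· + nl a))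
        (fun L _ => (L.filter (· < nl a), (L.filter (nl a ≤ ·)).image (· - nl a)))
        ?_ ?_ ?_ ?_ ?_
      · rintro ⟨I, J⟩ hp
        rw [Finset.mem_product, Finset.mem_powerset, Finset.mem_powerset] at hp
        exact Finset.mem_powerset.mpr (union_shift_subset hp.1 hp.2)
      · intro L hL
        rw [Finset.mem_powerset] at hL
        rw [Finset.mem_product, Finset.mem_powerset, Finset.mem_powerset]
        exact ⟨filter_lt_subset_range L, image_sub_subset_range hL⟩
      · rintro ⟨I, J⟩ hp
        rw [Finset.mem_product, Finset.mem_powerset, Finset.mem_powerset] at hp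
        exact Prod.ext (filter_lt_union hp.1) (filter_ge_union hp.1)
      · intro L hL
        rw [Finset.mem_powerset] at hL
        exact union_filter_recover hL
      · rintro ⟨I, J⟩ hp
        rw [Finset.mem_product, Finset.mem_powerset, Finset.mem_powerset] at hp
        rw [red_mul hp.1, sdiff_union_shift hp.1 hp.2,
          red_mul (Finset.sdiff_subset)]

/-! ### Coassociativity machinery -/

lemma sum_mulA2_apply {N : Type*} [AddCommMonoid N] (w1 w2 : (MagW X × MagW X) →₀ K)
    (φ : MagW X × MagW X → K → N) (h0 : ∀ p, φ p 0 = 0)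
    (hadd : ∀ p c1 c2, φ p (c1 + c2) = φ p c1 + φ p c2) :
    (mulA2 w1 w2).sum φ = w1.sum fun a c => w2.sum fun b d => φ (a.1 * b.1, a.2 * b.2) (c * d) := by
  unfold mulA2
  rw [Finsupp.sum_sum_index h0 hadd]
  refine Finsupp.sum_congr fun a _ => ?_
  rw [Finsupp.sum_sum_index h0 hadd]
  exact Finsupp.sum_congr fun b _ => Finsupp.sum_single_index (h0 _)

def FF (Δ : MagA K X →ₗ[K] ((MagW X × MagW X) →₀ K)) (u : (MagW X × MagW X) →₀ K) :
    (MagW X × MagW X × MagW X) →₀ K :=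
  u.sum fun p c => (Δ (Finsupp.single p.1 1)).sum fun q d =>
    Finsupp.single (q.1, q.2, p.2) (c * d)

def GG (Δ : MagA K X →ₗ[K] ((MagW X × MagW X) →₀ K)) (u : (MagW X × MagW X) →₀ K) :
    (MagW X × MagW X × MagW X) →₀ K :=
  u.sum fun p c => (Δ (Finsupp.single p.2 1)).sum fun q d =>
    Finsupp.single (p.1, q.1, q.2) (c * d)

def mulA3 (u v : (MagW X × MagW X × MagW X) →₀ K) : (MagW X × MagW X × MagW X) →₀ K :=
  u.sum fun a c => v.sum fun b d =>
    Finsupp.single (a.1 * b.1, a.2.1 * b.2.1, a.2.2 * b.2.2) (c * d)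

lemma FF_sum {N : Type*} [AddCommMonoid N] (Δ : MagA K X →ₗ[K] ((MagW X × MagW X) →₀ K))
    (u : (MagW X × MagW X) →₀ K) (φ : MagW X × MagW X × MagW X → K → N)
    (h0 : ∀ p, φ p 0 = 0) (hadd : ∀ p c1 c2, φ p (c1 + c2) = φ p c1 + φ p c2) :
    (FF Δ u).sum φ =
      u.sum fun p c => (Δ (Finsupp.single p.1 1)).sum fun q d => φ (q.1, q.2, p.2) (c * d) := by
  unfold FF
  rw [Finsupp.sum_sum_index h0 hadd]
  refine Finsupp.sum_congr fun p _ => ?_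
  rw [Finsupp.sum_sum_index h0 hadd]
  exact Finsupp.sum_congr fun q _ => Finsupp.sum_single_index (h0 _)

lemma GG_sum {N : Type*} [AddCommMonoid N] (Δ : MagA K X →ₗ[K] ((MagW X × MagW X) →₀ K))
    (u : (MagW X × MagW X) →₀ K) (φ : MagW X × MagW X × MagW X → K → N)
    (h0 : ∀ p, φ p 0 = 0) (hadd : ∀ p c1 c2, φ p (c1 + c2) = φ p c1 + φ p c2) :
    (GG Δ u).sum φ =
      u.sum fun p c => (Δ (Finsupp.single p.2 1)).sum fun q d => φ (p.1, q.1, q.2) (c * d) := by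
  unfold GG
  rw [Finsupp.sum_sum_index h0 hadd]
  refine Finsupp.sum_congr fun p _ => ?_
  rw [Finsupp.sum_sum_index h0 hadd]
  exact Finsupp.sum_congr fun q _ => Finsupp.sum_single_index (h0 _)

lemma delta_single_mul (Δ : MagA K X →ₗ[K] ((MagW X × MagW X) →₀ K))
    (hΔmul : ∀ f g : MagA K X, Δ (mulA f g) = mulA2 (Δ f) (Δ g)) (x y : MagW X) :
    Δ (Finsupp.single (x * y) 1) = mulA2 (Δ (Finsupp.single x 1)) (Δ (Finsupp.single y 1)) := by
  rw [show (Finsupp.single (x * y) (1 : K) : MagA K X)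
      = mulA (Finsupp.single x 1) (Finsupp.single y 1) by rw [mulA_single, one_mul], hΔmul]

lemma FF_mulA2 (Δ : MagA K X →ₗ[K] ((MagW X × MagW X) →₀ K))
    (hΔmul : ∀ f g : MagA K X, Δ (mulA f g) = mulA2 (Δ f) (Δ g))
    (u v : (MagW X × MagW X) →₀ K) :
    FF Δ (mulA2 u v) = mulA3 (FF Δ u) (FF Δ v) := by
  have hL : FF Δ (mulA2 u v) =
      u.sum fun a c => v.sum fun b d =>
        (Δ (Finsupp.single a.1 1)).sum fun qa da =>
          (Δ (Finsupp.single b.1 1)).sum fun qb db =>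
            Finsupp.single (qa.1 * qb.1, qa.2 * qb.2, a.2 * b.2) (c * da * (d * db)) := by
    rw [show FF Δ (mulA2 u v) = (mulA2 u v).sum fun p c =>
        (Δ (Finsupp.single p.1 1)).sum fun q d => Finsupp.single (q.1, q.2, p.2) (c * d)
      from rfl]
    rw [sum_mulA2_apply _ _ _ (fun p => by simp)
      (fun p c1 c2 => by simp [add_mul, Finsupp.single_add, Finsupp.sum_add])]
    refine Finsupp.sum_congr fun a _ => Finsupp.sum_congr fun b _ => ?_
    rw [delta_single_mul Δ hΔmul]
    rw [sum_mulA2_apply _ _ _ (fun p => by simp)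
      (fun p c1 c2 => by simp [mul_add, Finsupp.single_add])]
    refine Finsupp.sum_congr fun qa da' => Finsupp.sum_congr fun qb db' => ?_
    rw [mul_mul_mul_comm]
  rw [hL]
  rw [show mulA3 (FF Δ u) (FF Δ v) = (FF Δ u).sum fun r cr => (FF Δ v).sum fun s cs =>
      Finsupp.single (r.1 * s.1, r.2.1 * s.2.1, r.2.2 * s.2.2) (cr * cs) from rfl]
  rw [FF_sum _ _ _ (fun r => by simp)
    (fun r c1 c2 => by simp [add_mul, Finsupp.single_add, Finsupp.sum_add])]
  refine Finsupp.sum_congr fun a _ => ?_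
  rw [Finsupp.sum_comm v (Δ (Finsupp.single a.1 1))]
  refine Finsupp.sum_congr fun qa _ => ?_
  rw [FF_sum _ _ _ (fun r => by simp)
    (fun r c1 c2 => by simp [mul_add, Finsupp.single_add])]

lemma GG_mulA2 (Δ : MagA K X →ₗ[K] ((MagW X × MagW X) →₀ K))
    (hΔmul : ∀ f g : MagA K X, Δ (mulA f g) = mulA2 (Δ f) (Δ g))
    (u v : (MagW X × MagW X) →₀ K) :
    GG Δ (mulA2 u v) = mulA3 (GG Δ u) (GG Δ v) := by
  have hL : GG Δ (mulA2 u v) =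
      u.sum fun a c => v.sum fun b d =>
        (Δ (Finsupp.single a.2 1)).sum fun qa da =>
          (Δ (Finsupp.single b.2 1)).sum fun qb db =>
            Finsupp.single (a.1 * b.1, qa.1 * qb.1, qa.2 * qb.2) (c * da * (d * db)) := by
    rw [show GG Δ (mulA2 u v) = (mulA2 u v).sum fun p c =>
        (Δ (Finsupp.single p.2 1)).sum fun q d => Finsupp.single (p.1, q.1, q.2) (c * d)
      from rfl]
    rw [sum_mulA2_apply _ _ _ (fun p => by simp)
      (fun p c1 c2 => by simp [add_mul, Finsupp.single_add, Finsupp.sum_add])]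
    refine Finsupp.sum_congr fun a _ => Finsupp.sum_congr fun b _ => ?_
    rw [delta_single_mul Δ hΔmul]
    rw [sum_mulA2_apply _ _ _ (fun p => by simp)
      (fun p c1 c2 => by simp [mul_add, Finsupp.single_add])]
    refine Finsupp.sum_congr fun qa da' => Finsupp.sum_congr fun qb db' => ?_
    rw [mul_mul_mul_comm]
  rw [hL]
  rw [show mulA3 (GG Δ u) (GG Δ v) = (GG Δ u).sum fun r cr => (GG Δ v).sum fun s cs =>
      Finsupp.single (r.1 * s.1, r.2.1 * s.2.1, r.2.2 * s.2.2) (cr * cs) from rfl]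
  rw [GG_sum _ _ _ (fun r => by simp)
    (fun r c1 c2 => by simp [add_mul, Finsupp.single_add, Finsupp.sum_add])]
  refine Finsupp.sum_congr fun a _ => ?_
  rw [Finsupp.sum_comm v (Δ (Finsupp.single a.2 1))]
  refine Finsupp.sum_congr fun qa _ => ?_
  rw [GG_sum _ _ _ (fun r => by simp)
    (fun r c1 c2 => by simp [mul_add, Finsupp.single_add])]

lemma FF_single (Δ : MagA K X →ₗ[K] ((MagW X × MagW X) →₀ K)) (p : MagW X × MagW X) (c : K) :
    FF Δ (Finsupp.single p c) =
      (Δ (Finsupp.single p.1 1)).sum fun q d => Finsupp.single (q.1, q.2, p.2) (c * d) :=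
  Finsupp.sum_single_index (by simp)

lemma GG_single (Δ : MagA K X →ₗ[K] ((MagW X × MagW X) →₀ K)) (p : MagW X × MagW X) (c : K) :
    GG Δ (Finsupp.single p c) =
      (Δ (Finsupp.single p.2 1)).sum fun q d => Finsupp.single (p.1, q.1, q.2) (c * d) :=
  Finsupp.sum_single_index (by simp)

lemma FF_add (Δ : MagA K X →ₗ[K] ((MagW X × MagW X) →₀ K)) (u v : (MagW X × MagW X) →₀ K) :
    FF Δ (u + v) = FF Δ u + FF Δ v :=
  Finsupp.sum_add_index' (fun p => by simp)
    (fun p c1 c2 => by simp [add_mul, Finsupp.single_add, Finsupp.sum_add])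

lemma GG_add (Δ : MagA K X →ₗ[K] ((MagW X × MagW X) →₀ K)) (u v : (MagW X × MagW X) →₀ K) :
    GG Δ (u + v) = GG Δ u + GG Δ v :=
  Finsupp.sum_add_index' (fun p => by simp)
    (fun p c1 c2 => by simp [add_mul, Finsupp.single_add, Finsupp.sum_add])

lemma coassoc (Δ : MagA K X →ₗ[K] ((MagW X × MagW X) →₀ K))
    (hΔ1 : Δ (Finsupp.single 1 1) = Finsupp.single (1, 1) 1)
    (hΔmul : ∀ f g : MagA K X, Δ (mulA f g) = mulA2 (Δ f) (Δ g))
    (hΔx : ∀ x : X, Δ (Finsupp.single (↑(FreeMagma.of x)) 1) =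
      Finsupp.single ((↑(FreeMagma.of x) : MagW X), (1 : MagW X)) 1 +
        Finsupp.single ((1 : MagW X), (↑(FreeMagma.of x) : MagW X)) 1) :
    ∀ t : MagW X, FF Δ (Δ (Finsupp.single t 1)) = GG Δ (Δ (Finsupp.single t 1)) := by
  have base : FF Δ (Δ (Finsupp.single (1 : MagW X) 1)) = GG Δ (Δ (Finsupp.single (1 : MagW X) 1)) := by
    rw [hΔ1, FF_single, GG_single]
    rw [show ((1, 1) : MagW X × MagW X).1 = 1 from rfl,
      show ((1, 1) : MagW X × MagW X).2 = 1 from rfl, hΔ1]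
    rw [Finsupp.sum_single_index (by simp), Finsupp.sum_single_index (by simp)]
  have key : ∀ T : FreeMagma X,
      FF Δ (Δ (Finsupp.single (↑T : MagW X) 1)) = GG Δ (Δ (Finsupp.single (↑T : MagW X) 1)) := by
    intro T
    induction T with
    | ih1 x =>
        rw [hΔx, FF_add, GG_add, FF_single, FF_single, GG_single, GG_single]
        simp only
        rw [hΔx, hΔ1]
        rw [Finsupp.sum_add_index' (fun p => by simp)
          (fun p c1 c2 => by simp [mul_add, Finsupp.single_add]),
          Finsupp.sum_add_index' (fun p => by simp)
          (fun p c1 c2 => by simp [mul_add, Finsupp.single_add])]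
        rw [Finsupp.sum_single_index (by simp), Finsupp.sum_single_index (by simp),
          Finsupp.sum_single_index (by simp), Finsupp.sum_single_index (by simp),
          Finsupp.sum_single_index (by simp), Finsupp.sum_single_index (by simp)]
        abel
    | ih2 a b iha ihb =>
        rw [show ((↑(a * b) : MagW X)) = (↑a : MagW X) * ↑b from rfl]
        rw [delta_single_mul Δ hΔmul, FF_mulA2 Δ hΔmul, GG_mulA2 Δ hΔmul, iha, ihb]
  intro t
  exact WithOne.cases_on t base key

end Stmt12Aux

open Stmt12Aux in
/-- On the graded dual of `K{X}` (trees identified with their dual basis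
elements), the multiplication `⧢ = Δ_a^*` dual to the diagonal — characterized by
`(f₁ ⧢ f₂)(a) = ∑ f₁(a₍₁₎) f₂(a₍₂₎)` for `Δ_a(a) = ∑ a₍₁₎ ⊗ a₍₂₎` — is commutative and
associative, and on tree monomials `T¹ ⧢ T² = ∑_T binom(T; T¹,T²) T`, where
`binom(T; T¹,T²)` is the number of subsets `I ⊆ Le(T)` with `red(T|I) = T¹` and
`red(T|I^c) = T²` (in particular only shuffles `T` of `T¹` and `T²` occur). -/
theorem stmt12 (K X : Type) [Field K] [CharZero K] [DecidableEq X]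
    (Δ : MagA K X →ₗ[K] ((MagW X × MagW X) →₀ K))
    (hΔ1 : Δ (Finsupp.single 1 1) = Finsupp.single (1, 1) 1)
    (hΔmul : ∀ f g : MagA K X, Δ (mulA f g) = mulA2 (Δ f) (Δ g))
    (hΔx : ∀ x : X, Δ (Finsupp.single (↑(FreeMagma.of x)) 1) =
      Finsupp.single ((↑(FreeMagma.of x) : MagW X), (1 : MagW X)) 1 +
        Finsupp.single ((1 : MagW X), (↑(FreeMagma.of x) : MagW X)) 1)
    (sh : MagA K X → MagA K X → MagA K X)
    (hsh : ∀ (f g : MagA K X) (t : MagW X),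
      sh f g t = (Δ (Finsupp.single t 1)).sum fun p c => c * (f p.1 * g p.2)) :
    (∀ f g : MagA K X, sh f g = sh g f) ∧
    (∀ f g h : MagA K X, sh (sh f g) h = sh f (sh g h)) ∧
    (∀ T₁ T₂ T : FreeMagma X,
      sh (Finsupp.single (↑T₁ : MagW X) 1) (Finsupp.single (↑T₂ : MagW X) 1) (↑T : MagW X) =
        (((Finset.range (nl T)).powerset.filter
          (fun I => red T I = (↑T₁ : MagW X) ∧ red T ((Finset.range (nl T)) \ I) = (↑T₂ : MagW X))).card
            : K)) := by
  refine ⟨?_, ?_, ?_⟩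
  · -- commutativity
    intro f g
    ext t
    rw [hsh, hsh]
    refine WithOne.cases_on t ?_ ?_
    · rw [hΔ1, Finsupp.sum_single_index (by simp), Finsupp.sum_single_index (by simp)]
      ring
    · intro T
      rw [lemA Δ hΔmul hΔx T]
      rw [sum_sum_single _ _ _ (fun p => by simp) (fun p c1 c2 => by ring),
        sum_sum_single _ _ _ (fun p => by simp) (fun p c1 c2 => by ring)]
      refine Finset.sum_bij' (fun I _ => Finset.range (nl T) \ I)
        (fun I _ => Finset.range (nl T) \ I) ?_ ?_ ?_ ?_ ?_
      · intro I hI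
        exact Finset.mem_powerset.mpr Finset.sdiff_subset
      · intro I hI
        exact Finset.mem_powerset.mpr Finset.sdiff_subset
      · intro I hI
        exact Finset.sdiff_sdiff_eq_self (Finset.mem_powerset.mp hI)
      · intro I hI
        exact Finset.sdiff_sdiff_eq_self (Finset.mem_powerset.mp hI)
      · intro I hI
        rw [Finset.sdiff_sdiff_eq_self (Finset.mem_powerset.mp hI)]
        ring
  · -- associativity
    intro f g h
    ext t
    have e1 : sh (sh f g) h t =
        (FF Δ (Δ (Finsupp.single t 1))).sum fun r e => e * (f r.1 * (g r.2.1 * h r.2.2)) := by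
      rw [hsh]
      rw [FF_sum _ _ _ (fun r => by simp) (fun r c1 c2 => by ring)]
      refine Finsupp.sum_congr fun p _ => ?_
      rw [hsh f g p.1, Finsupp.sum_mul, Finsupp.mul_sum]
      refine Finsupp.sum_congr fun q _ => ?_
      ring
    have e2 : sh f (sh g h) t =
        (GG Δ (Δ (Finsupp.single t 1))).sum fun r e => e * (f r.1 * (g r.2.1 * h r.2.2)) := by
      rw [hsh]
      rw [GG_sum _ _ _ (fun r => by simp) (fun r c1 c2 => by ring)]
      refine Finsupp.sum_congr fun p _ => ?_
      rw [hsh g h p.2, Finsupp.mul_sum, Finsupp.mul_sum]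
      refine Finsupp.sum_congr fun q _ => ?_
      ring
    rw [e1, e2, coassoc Δ hΔ1 hΔmul hΔx t]
  · -- the explicit formula
    intro T₁ T₂ T
    rw [hsh, lemA Δ hΔmul hΔx T]
    rw [sum_sum_single _ _ _ (fun p => by simp) (fun p c1 c2 => by ring)]
    have step : ∀ I ∈ (Finset.range (nl T)).powerset,
        (1 : K) * ((Finsupp.single (↑T₁ : MagW X) (1 : K)) (red T I) *
          (Finsupp.single (↑T₂ : MagW X) (1 : K)) (red T (Finset.range (nl T) \ I))) =
        if red T I = (↑T₁ : MagW X) ∧ red T ((Finset.range (nl T)) \ I) = (↑T₂ : MagW X)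
          then (1 : K) else 0 := by
      intro I _
      rw [Finsupp.single_apply, Finsupp.single_apply, one_mul]
      rcases eq_or_ne (red T I) ((↑T₁ : MagW X)) with h1 | h1 <;>
        rcases eq_or_ne (red T (Finset.range (nl T) \ I)) ((↑T₂ : MagW X)) with h2 | h2
      · simp [h1, h2]
      · simp [h1, h2, h2.symm]
      · simp [h1, h1.symm, h2]
      · simp [h1, h1.symm, h2, h2.symm]
    calc _ = ∑ I ∈ (Finset.range (nl T)).powerset,
          if red T I = (↑T₁ : MagW X) ∧ red T ((Finset.range (nl T)) \ I) = (↑T₂ : MagW X)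
            then (1 : K) else 0 := Finset.sum_congr rfl step
      _ = _ := by rw [Finset.sum_boole]
end
end
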